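/- arXiv:2105.02669 — 12 statements merged into one kernel-verified Lean document; each statement's English description precedes it below -/
import Mathlib

section
/- There exists an instance of the Co-Travellers Game with three players that admits no Traditional Strong Equilibrium: namely, three players A, B, C where travelling alone is each player's worst option, the group {A,B,C} is infeasible, and the pairwise preferences are cyclic (A prefers B over C, B prefers C over A, C prefers A over B). -/
open Finset

/-- Feasible groups of the three-player instance: all subsets of size at most 2. -/
def G3 : Set (Finset (Fin 3)) := {G | G.card ≤ 2}

/-- A matching: each player belongs to her feasible group, and groups are coordinated
(so the chosen groups partition the players). -/
def IsMatching3 (M : Fin 3 → Finset (Fin 3)) : Prop :=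
  (∀ i, M i ∈ G3) ∧ (∀ i, i ∈ M i) ∧ ∀ i j, j ∈ M i → M j = M i

/-- Traditional Strong Equilibrium: for every feasible group `G`, either all members of `G`
are matched together as `G`, or some member of `G` weakly prefers her current group to `G`. -/
def IsTSE3 (c : Fin 3 → Finset (Fin 3) → ℝ) (M : Fin 3 → Finset (Fin 3)) : Prop :=
  ∀ G ∈ G3, G.Nonempty → (∀ i ∈ G, M i = G) ∨ ∃ i ∈ G, c i (M i) ≤ c i G

def cex : Fin 3 → Finset (Fin 3) → ℝ := fun i G =>
  if G = {i} then 3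
  else if G = (if i = 0 then ({0,1} : Finset (Fin 3)) else if i = 1 then {1,2} else {0,2}) then 1
  else 2

lemma cex001 : cex 0 {0,1} = 1 := by simp [cex]; decide
lemma cex002 : cex 0 {0,2} = 2 := by
  simp only [cex]; rw [if_neg (by decide), if_neg (by decide)]
lemma cex00 : cex 0 {0} = 3 := by simp [cex]
lemma cex101 : cex 1 {0,1} = 2 := by simp [cex]; decide
lemma cex112 : cex 1 {1,2} = 1 := by simp [cex]; decide
lemma cex11 : cex 1 {1} = 3 := by simp [cex]
lemma cex202 : cex 2 {0,2} = 1 := by simp [cex]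
lemma cex212 : cex 2 {1,2} = 2 := by
  simp only [cex]; rw [if_neg (by decide), if_neg (by decide)]
lemma cex22 : cex 2 {2} = 3 := by simp [cex]

lemma cases3 : ∀ S : Finset (Fin 3), S.card ≤ 2 →
    (0 ∈ S → S = {0} ∨ S = {0,1} ∨ S = {0,2}) ∧
    (1 ∈ S → S = {1} ∨ S = {0,1} ∨ S = {1,2}) ∧
    (2 ∈ S → S = {2} ∨ S = {0,2} ∨ S = {1,2}) := by decide


/-- There is a three-player instance of the Co-Travellers Game with no Traditional Strong
Equilibrium: travelling alone is each player's worst option, the full group is infeasible,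
and the pairwise preferences are cyclic. -/
theorem exists_instance_without_TSE :
    ∃ c : Fin 3 → Finset (Fin 3) → ℝ,
      (∀ i j : Fin 3, i ≠ j → c i ({i, j} : Finset (Fin 3)) < c i ({i} : Finset (Fin 3))) ∧
      c 0 ({0, 1} : Finset (Fin 3)) < c 0 ({0, 2} : Finset (Fin 3)) ∧
      c 1 ({1, 2} : Finset (Fin 3)) < c 1 ({0, 1} : Finset (Fin 3)) ∧
      c 2 ({0, 2} : Finset (Fin 3)) < c 2 ({1, 2} : Finset (Fin 3)) ∧
      ∀ M : Fin 3 → Finset (Fin 3), IsMatching3 M → ¬ IsTSE3 c M := by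
  refine ⟨cex, ?_, ?_, ?_, ?_, ?_⟩
  · intro i j hij
    fin_cases i <;> fin_cases j <;> simp_all <;>
      simp only [cex001, cex002, cex00, cex101, cex112, cex11, cex202, cex212, cex22,
        show ({1,0} : Finset (Fin 3)) = {0,1} from by decide,
        show ({2,0} : Finset (Fin 3)) = {0,2} from by decide,
        show ({2,1} : Finset (Fin 3)) = {1,2} from by decide] <;> norm_num
  · rw [cex001, cex002]; norm_num
  · rw [cex112, cex101]; norm_num
  · rw [cex202, cex212]; norm_num
  · rintro M ⟨hG, hmem, hcoord⟩ hT
    have h0 := (cases3 (M 0) (hG 0)).1 (hmem 0)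
    have h1 := (cases3 (M 1) (hG 1)).2.1 (hmem 1)
    have h2 := (cases3 (M 2) (hG 2)).2.2 (hmem 2)
    -- blocking helper for pair {0,1}
    have b01 : M 0 ≠ {0,1} → 1 < cex 0 (M 0) → 2 < cex 1 (M 1) → False := by
      intro hne hc0 hc1
      rcases hT {0,1} (by simp [G3]) ⟨0, by simp⟩ with h | ⟨i, hi, hci⟩
      · exact hne (h 0 (by simp))
      · fin_cases hi
        · rw [cex001] at hci; linarith
        · rw [cex101] at hci; linarith
    have b12 : M 1 ≠ {1,2} → cex 1 (M 1) = 2 → cex 2 (M 2) = 3 → False := by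
      intro hne hc1 hc2
      rcases hT {1,2} (by simp [G3]) ⟨1, by simp⟩ with h | ⟨i, hi, hci⟩
      · exact hne (h 1 (by simp))
      · fin_cases hi
        · rw [hc1, cex112] at hci; norm_num at hci
        · rw [hc2, cex212] at hci; norm_num at hci
    have b02 : M 0 ≠ {0,2} → cex 0 (M 0) = 3 → cex 2 (M 2) = 2 → False := by
      intro hne hc0 hc2
      rcases hT {0,2} (by simp [G3]) ⟨0, by simp⟩ with h | ⟨i, hi, hci⟩
      · exact hne (h 0 (by simp))
      · fin_cases hi
        · rw [hc0, cex002] at hci; norm_num at hci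
        · rw [hc2, cex202] at hci; norm_num at hci
    rcases h0 with h0 | h0 | h0
    · rcases h1 with h1 | h1 | h1
      · -- M0={0}, M1={1}: block {0,1}
        exact b01 (by rw [h0]; decide) (by rw [h0, cex00]; norm_num) (by rw [h1, cex11]; norm_num)
      · -- M1={0,1}: then 0 ∈ M 1 so M 0 = M 1 = {0,1}, contradiction with M 0 = {0}
        have := hcoord 1 0 (by rw [h1]; decide)
        rw [h0, h1] at this; exact absurd this (by decide)
      · -- M0={0}, M1={1,2}: then M2 = {1,2}; block {0,2}
        have h2' := hcoord 1 2 (by rw [h1]; decide)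
        rw [h1] at h2'
        exact b02 (by rw [h0]; decide) (by rw [h0, cex00]) (by rw [h2', cex212])
    · -- M0={0,1}: M1={0,1}, M2 ≠ {0,2},{1,2}: M2={2}; block {1,2}
      have h1' := hcoord 0 1 (by rw [h0]; decide)
      rw [h0] at h1'
      have h2' : M 2 = {2} := by
        rcases h2 with h2 | h2 | h2
        · exact h2
        · have := hcoord 2 0 (by rw [h2]; decide)
          rw [h0, h2] at this; exact absurd this (by decide)
        · have := hcoord 2 1 (by rw [h2]; decide)
          rw [h1', h2] at this; exact absurd this (by decide)
      exact b12 (by rw [h1']; decide) (by rw [h1', cex101]) (by rw [h2', cex22])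
    · -- M0={0,2}: M2={0,2}, M1={1}; block {0,1}
      have h2' := hcoord 0 2 (by rw [h0]; decide)
      rw [h0] at h2'
      have h1' : M 1 = {1} := by
        rcases h1 with h1 | h1 | h1
        · exact h1
        · have := hcoord 1 0 (by rw [h1]; decide)
          rw [h0, h1] at this; exact absurd this (by decide)
        · have := hcoord 1 2 (by rw [h1]; decide)
          rw [h2', h1] at this; exact absurd this (by decide)
      exact b01 (by rw [h0]; decide) (by rw [h0, cex002]; norm_num) (by rw [h1', cex11]; norm_num)
end

section
/- The three-player cyclic instance with costs as in the illustrative Amsterdam example also admits no Ridepooling Semi-Individual Equilibrium. -/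
open Finset

/-- Two disjoint groups `G₁, G₂` are individually unstable: some `i ∈ G₁` can move to
`G₂` with `G₂ ∪ {i}` feasible, `i` strictly improving, and every member of `G₂`
weakly improving. -/
def IndUnstable3 (c : Fin 3 → Finset (Fin 3) → ℝ) (G₁ G₂ : Finset (Fin 3)) : Prop :=
  ∃ i ∈ G₁, insert i G₂ ∈ G3 ∧ c i (insert i G₂) < c i G₁ ∧
    ∀ j ∈ G₂, c j (insert i G₂) ≤ c j G₂

/-- Ridepooling Semi-Individual Equilibrium: no group of the matching is individually
unstable with another group of the matching, nor with the empty group (a player may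
also leave to travel alone). -/
def IsRSIE3 (c : Fin 3 → Finset (Fin 3) → ℝ) (M : Fin 3 → Finset (Fin 3)) : Prop :=
  ∀ a : Fin 3, ∀ G₂ : Finset (Fin 3), ((∃ b, M b = G₂) ∨ G₂ = ∅) →
    Disjoint (M a) G₂ → ¬ IndUnstable3 c (M a) G₂

def good3 : Fin 3 → Finset (Fin 3) := ![{0,1},{1,2},{0,2}]
def bad3 : Fin 3 → Finset (Fin 3) := ![{0,2},{0,1},{1,2}]

def v3 : Fin 3 → Finset (Fin 3) → ℕ := fun i G =>
  if G = good3 i then 1 else if G = bad3 i then 2 else 10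

def cc3 : Fin 3 → Finset (Fin 3) → ℝ := fun i G => (v3 i G : ℝ)

lemma cc3_lt {i : Fin 3} {G G' : Finset (Fin 3)} (h : v3 i G < v3 i G') :
    cc3 i G < cc3 i G' := by unfold cc3; exact_mod_cast h

lemma cc3_le {i : Fin 3} {G G' : Finset (Fin 3)} (h : v3 i G ≤ v3 i G') :
    cc3 i G ≤ cc3 i G' := by unfold cc3; exact_mod_cast h

/-- The three-player cyclic instance (pairs strictly better than solo for both members,
cyclic pairwise preferences) admits no Ridepooling Semi-Individual Equilibrium. -/
theorem exists_instance_without_RSIE :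
    ∃ c : Fin 3 → Finset (Fin 3) → ℝ,
      (∀ i j : Fin 3, i ≠ j → c i ({i, j} : Finset (Fin 3)) < c i ({i} : Finset (Fin 3))) ∧
      c 0 ({0, 1} : Finset (Fin 3)) < c 0 ({0, 2} : Finset (Fin 3)) ∧
      c 1 ({1, 2} : Finset (Fin 3)) < c 1 ({0, 1} : Finset (Fin 3)) ∧
      c 2 ({0, 2} : Finset (Fin 3)) < c 2 ({1, 2} : Finset (Fin 3)) ∧
      ∀ M : Fin 3 → Finset (Fin 3), IsMatching3 M → ¬ IsRSIE3 c M := by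
  refine ⟨cc3, fun i j h => cc3_lt (by revert i j h; decide),
    cc3_lt (by decide), cc3_lt (by decide), cc3_lt (by decide), ?_⟩
  rintro M ⟨hfeas, hmem, hcoord⟩ hRSIE
  by_cases h1 : (1 : Fin 3) ∈ M 0 <;> by_cases h2 : (2 : Fin 3) ∈ M 0
  · -- M 0 would have all three players
    have hsub : ({0,1,2} : Finset (Fin 3)) ⊆ M 0 := by
      intro x hx; fin_cases hx
      exacts [hmem 0, h1, h2]
    have hc := Finset.card_le_card hsub
    have hf := hfeas 0
    simp only [G3, Set.mem_setOf_eq] at hf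
    have : ({0,1,2} : Finset (Fin 3)).card = 3 := by decide
    omega
  · -- M 0 = {0,1}, M 2 = {2} : player 1 moves to {2}
    have e0 : M 0 = {0,1} := by
      ext x; fin_cases x
      · simp [hmem 0]
      · simp [h1]
      · simp [h2]
    have e1 : M 1 = {0,1} := by rw [hcoord 0 1 h1, e0]
    have e2 : M 2 = {2} := by
      ext x; fin_cases x
      · simp only [Finset.mem_singleton]
        constructor
        · intro hx
          exact absurd ((hcoord 2 0 hx) ▸ hmem 2) h2
        · intro hx; exact absurd hx (by decide)
      · simp only [Finset.mem_singleton]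
        constructor
        · intro hx
          have := (hcoord 2 1 hx) ▸ hmem 2
          rw [e1] at this
          exact absurd this (by decide)
        · intro hx; exact absurd hx (by decide)
      · simp [hmem 2]
    have hins : insert (1 : Fin 3) ({2} : Finset (Fin 3)) = {1,2} := by decide
    refine hRSIE 1 (M 2) (Or.inl ⟨2, rfl⟩) (by rw [e1, e2]; decide) ⟨1, ?_, ?_, ?_, ?_⟩
    · rw [e1]; decide
    · rw [e2]
      show (insert (1 : Fin 3) ({2} : Finset (Fin 3))).card ≤ 2
      decide
    · rw [e1, e2, hins]; exact cc3_lt (by decide)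
    · rw [e2]; intro j hj; fin_cases hj
      rw [hins]; exact cc3_le (by decide)
  · -- M 0 = {0,2}, M 1 = {1} : player 0 moves to {1}
    have e0 : M 0 = {0,2} := by
      ext x; fin_cases x
      · simp [hmem 0]
      · simp [h1]
      · simp [h2]
    have e2 : M 2 = {0,2} := by rw [hcoord 0 2 h2, e0]
    have e1 : M 1 = {1} := by
      ext x; fin_cases x
      · simp only [Finset.mem_singleton]
        constructor
        · intro hx
          exact absurd ((hcoord 1 0 hx) ▸ hmem 1) h1
        · intro hx; exact absurd hx (by decide)
      · simp [hmem 1]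
      · simp only [Finset.mem_singleton]
        constructor
        · intro hx
          have := (hcoord 1 2 hx) ▸ hmem 1
          rw [e2] at this
          exact absurd this (by decide)
        · intro hx; exact absurd hx (by decide)
    have hins : insert (0 : Fin 3) ({1} : Finset (Fin 3)) = {0,1} := by decide
    refine hRSIE 0 (M 1) (Or.inl ⟨1, rfl⟩) (by rw [e0, e1]; decide) ⟨0, ?_, ?_, ?_, ?_⟩
    · rw [e0]; decide
    · rw [e1]
      show (insert (0 : Fin 3) ({1} : Finset (Fin 3))).card ≤ 2
      decide
    · rw [e0, e1, hins]; exact cc3_lt (by decide)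
    · rw [e1]; intro j hj; fin_cases hj
      rw [hins]; exact cc3_le (by decide)
  · -- M 0 = {0}
    have e0 : M 0 = {0} := by
      ext x; fin_cases x
      · simp [hmem 0]
      · simp [h1]
      · simp [h2]
    by_cases h12 : (2 : Fin 3) ∈ M 1
    · -- M 1 = {1,2} : player 2 moves to {0}
      have e1 : M 1 = {1,2} := by
        ext x; fin_cases x
        · constructor
          · intro hx
            have := (hcoord 1 0 hx) ▸ hmem 1
            rw [e0] at this
            exact absurd this (by decide)
          · intro hx; exact absurd hx (by decide)
        · simp [hmem 1]
        · simp [h12]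
      have e2 : M 2 = {1,2} := by rw [hcoord 1 2 h12, e1]
      have hins : insert (2 : Fin 3) ({0} : Finset (Fin 3)) = {0,2} := by decide
      refine hRSIE 2 (M 0) (Or.inl ⟨0, rfl⟩) (by rw [e2, e0]; decide) ⟨2, ?_, ?_, ?_, ?_⟩
      · rw [e2]; decide
      · rw [e0]
        show (insert (2 : Fin 3) ({0} : Finset (Fin 3))).card ≤ 2
        decide
      · rw [e2, e0, hins]; exact cc3_lt (by decide)
      · rw [e0]; intro j hj; fin_cases hj
        rw [hins]; exact cc3_le (by decide)
    · -- all singletons : player 0 moves to {1}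
      have e1 : M 1 = {1} := by
        ext x; fin_cases x
        · simp only [Finset.mem_singleton]
          constructor
          · intro hx
            have := (hcoord 1 0 hx) ▸ hmem 1
            rw [e0] at this
            exact absurd this (by decide)
          · intro hx; exact absurd hx (by decide)
        · simp [hmem 1]
        · simp [h12]
      have hins : insert (0 : Fin 3) ({1} : Finset (Fin 3)) = {0,1} := by decide
      refine hRSIE 0 (M 1) (Or.inl ⟨1, rfl⟩) (by rw [e0, e1]; decide) ⟨0, ?_, ?_, ?_, ?_⟩
      · rw [e0]; decide
      · rw [e1]
        show (insert (0 : Fin 3) ({1} : Finset (Fin 3))).card ≤ 2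
        decide
      · rw [e0, e1, hins]; exact cc3_lt (by decide)
      · rw [e1]; intro j hj; fin_cases hj
        rw [hins]; exact cc3_le (by decide)
end

section
/- If the cost-sharing protocol is budget balanced (∑_{i∈G} c_i(G) = c(G) for every feasible group G), then any matching minimizing total group costs ∑ c(G) contains no pair of mergeable groups. -/
open Finset

/-- A matching: each player's group is feasible, contains her, and groups are coordinated. -/
def IsMatching {P : Type*} [DecidableEq P]
    (𝒢 : Set (Finset P)) (M : P → Finset P) : Prop :=
  (∀ i, M i ∈ 𝒢) ∧ (∀ i, i ∈ M i) ∧ ∀ i j, j ∈ M i → M j = M i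

/-- Total cost of a matching: the sum of the total group costs of its (distinct) groups. -/
noncomputable def matchCost {P : Type*} [Fintype P] [DecidableEq P]
    (c : Finset P → ℝ) (M : P → Finset P) : ℝ :=
  ∑ G ∈ Finset.univ.image M, c G

/-- Two disjoint groups `G₁, G₂` of the matching `M` are mergeable: their union is feasible,
every member weakly improves by merging and at least one member strictly improves. -/
def Mergeable {P : Type*} [DecidableEq P]
    (𝒢 : Set (Finset P)) (ci : P → Finset P → ℝ) (M : P → Finset P)
    (G₁ G₂ : Finset P) : Prop :=
  Disjoint G₁ G₂ ∧ G₁ ∪ G₂ ∈ 𝒢 ∧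
    (∀ i ∈ G₁ ∪ G₂, ci i (G₁ ∪ G₂) ≤ ci i (M i)) ∧
    ∃ i ∈ G₁ ∪ G₂, ci i (G₁ ∪ G₂) < ci i (M i)

/-- If the cost-sharing protocol is budget balanced (`∑_{i∈G} c_i(G) = c(G)` for every
feasible group), then any matching minimizing total group cost contains no pair of
mergeable groups. -/
theorem budget_balanced_optimal_no_mergeable {P : Type*} [Fintype P] [DecidableEq P]
    (𝒢 : Set (Finset P))
    (c : Finset P → ℝ) (ci : P → Finset P → ℝ)
    (hbb : ∀ G ∈ 𝒢, ∑ i ∈ G, ci i G = c G)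
    (M : P → Finset P) (hM : IsMatching 𝒢 M)
    (hopt : ∀ M', IsMatching 𝒢 M' → matchCost c M ≤ matchCost c M') :
    ∀ a b : P, M a ≠ M b → ¬ Mergeable 𝒢 ci M (M a) (M b) := by
  rintro a b hab ⟨hdisj, hU𝒢, hle, i₀, hi₀, hlt⟩
  obtain ⟨h𝒢, hmem, hcoord⟩ := hM
  set U : Finset P := M a ∪ M b with hUdef
  have hMa : ∀ i ∈ M a, M i = M a := fun i hi => hcoord a i hi
  have hMb : ∀ i ∈ M b, M i = M b := fun i hi => hcoord b i hi
  have hMU : ∀ i ∈ U, M i = M a ∨ M i = M b := by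
    intro i hi
    rcases Finset.mem_union.mp hi with h | h
    · exact Or.inl (hMa i h)
    · exact Or.inr (hMb i h)
  have hbnotA : b ∉ M a := fun h => hab (hMa b h).symm
  have hUnot : ∀ i, M i ≠ U := by
    intro i hMiU
    have ha : a ∈ M i := hMiU ▸ Finset.mem_union_left _ (hmem a)
    have hMaMi : M a = M i := hcoord i a ha
    have hb : b ∈ M a := by
      rw [hMaMi, hMiU]; exact Finset.mem_union_right _ (hmem b)
    exact hbnotA hb
  classical
  set M' : P → Finset P := fun i => if i ∈ U then U else M i with hM'def
  have hM'val : ∀ i, i ∈ U → M' i = U := fun i hi => if_pos hi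
  have hM'val' : ∀ i, i ∉ U → M' i = M i := fun i hi => if_neg hi
  have hM' : IsMatching 𝒢 M' := by
    refine ⟨?_, ?_, ?_⟩
    · intro i; by_cases h : i ∈ U
      · rw [hM'val i h]; exact hU𝒢
      · rw [hM'val' i h]; exact h𝒢 i
    · intro i; by_cases h : i ∈ U
      · rw [hM'val i h]; exact h
      · rw [hM'val' i h]; exact hmem i
    · intro i j hj
      by_cases h : i ∈ U
      · rw [hM'val i h] at hj ⊢; exact hM'val j hj
      · rw [hM'val' i h] at hj ⊢
        have hji : M j = M i := hcoord i j hj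
        have hjU : j ∉ U := by
          intro hjU
          apply h
          have hiMj : i ∈ M j := hji ▸ hmem i
          rcases hMU j hjU with h' | h'
          · exact Finset.mem_union_left _ (h' ▸ hiMj)
          · exact Finset.mem_union_right _ (h' ▸ hiMj)
        rw [hM'val' j hjU]; exact hji
  have hS' : Finset.univ.image M' = insert U ((Finset.univ.image M) \ {M a, M b}) := by
    ext G
    simp only [Finset.mem_image, Finset.mem_insert, Finset.mem_sdiff, Finset.mem_univ,
      true_and, Finset.mem_singleton]
    constructor
    · rintro ⟨i, rfl⟩
      by_cases h : i ∈ U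
      · left; exact hM'val i h
      · right
        rw [hM'val' i h]
        refine ⟨⟨i, rfl⟩, ?_⟩
        push_neg
        constructor
        · intro hMi; exact h (Finset.mem_union_left _ (hMi ▸ hmem i))
        · intro hMi; exact h (Finset.mem_union_right _ (hMi ▸ hmem i))
    · rintro (rfl | ⟨⟨i, rfl⟩, hne⟩)
      · exact ⟨a, hM'val a (Finset.mem_union_left _ (hmem a))⟩
      · push_neg at hne
        refine ⟨i, ?_⟩
        have hiU : i ∉ U := by
          intro hiU
          rcases hMU i hiU with h' | h'
          exacts [hne.1 h', hne.2 h']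
        rw [hM'val' i hiU]
  have hcU : c U < c (M a) + c (M b) := by
    have h1 : ∑ i ∈ U, ci i U < ∑ i ∈ U, ci i (M i) :=
      Finset.sum_lt_sum (fun i hi => hle i hi) ⟨i₀, hi₀, hlt⟩
    have h2 : ∑ i ∈ U, ci i (M i) = c (M a) + c (M b) := by
      rw [hUdef, Finset.sum_union hdisj]
      have e1 : ∑ i ∈ M a, ci i (M i) = ∑ i ∈ M a, ci i (M a) :=
        Finset.sum_congr rfl (fun i hi => by rw [hMa i hi])
      have e2 : ∑ i ∈ M b, ci i (M i) = ∑ i ∈ M b, ci i (M b) :=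
        Finset.sum_congr rfl (fun i hi => by rw [hMb i hi])
      rw [e1, e2, hbb (M a) (h𝒢 a), hbb (M b) (h𝒢 b)]
    calc c U = ∑ i ∈ U, ci i U := (hbb U hU𝒢).symm
      _ < ∑ i ∈ U, ci i (M i) := h1
      _ = c (M a) + c (M b) := h2
  have hUnotsd : U ∉ (Finset.univ.image M) \ {M a, M b} := by
    intro h
    obtain ⟨i, _, hi⟩ := Finset.mem_image.mp (Finset.mem_sdiff.mp h).1
    exact hUnot i hi
  have hsub : ({M a, M b} : Finset (Finset P)) ⊆ Finset.univ.image M := by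
    intro G hG
    rcases Finset.mem_insert.mp hG with rfl | hG
    · exact Finset.mem_image_of_mem M (Finset.mem_univ a)
    · rw [Finset.mem_singleton.mp hG]
      exact Finset.mem_image_of_mem M (Finset.mem_univ b)
  have hcost' : matchCost c M' = c U + ∑ G ∈ (Finset.univ.image M) \ {M a, M b}, c G := by
    rw [matchCost, hS', Finset.sum_insert hUnotsd]
  have hcost : matchCost c M
      = ∑ G ∈ (Finset.univ.image M) \ {M a, M b}, c G + (c (M a) + c (M b)) := by
    rw [matchCost, ← Finset.sum_sdiff hsub, Finset.sum_pair hab]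
  have hle' := hopt M' hM'
  rw [hcost, hcost'] at hle'
  linarith
end

section
/- Under the externality-based protocol, in which c_i(G) = c(G) − c(G \ {i}), every matching that minimizes total group cost is a Ridepooling Semi-Individual Equilibrium: no player i in group G_i can strictly decrease her cost by moving to another group G_j of the matching (with G_j ∪ {i} feasible), since her cost change equals the change in the total system cost, which is nonnegative by optimality. -/
open Finset

/-- Externality-based protocol: `c_i(G) = c(G) − c(G \ {i})`. -/
noncomputable def extCost {P : Type*} [DecidableEq P]
    (c : Finset P → ℝ) (i : P) (G : Finset P) : ℝ :=
  c G - c (G.erase i)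

/-- Groups `G₁, G₂` are individually unstable: some `i ∈ G₁` can move to `G₂` with
`G₂ ∪ {i}` feasible, `i` strictly improving, every member of `G₂` weakly improving. -/
def IndUnstable {P : Type*} [DecidableEq P]
    (𝒢 : Set (Finset P)) (ci : P → Finset P → ℝ) (G₁ G₂ : Finset P) : Prop :=
  ∃ i ∈ G₁, insert i G₂ ∈ 𝒢 ∧ ci i (insert i G₂) < ci i G₁ ∧
    ∀ j ∈ G₂, ci j (insert i G₂) ≤ ci j G₂

/-- Under the externality-based protocol, every matching minimizing total group cost is
a Ridepooling Semi-Individual Equilibrium: no pair of its groups is individually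
unstable. -/
theorem externality_optimal_is_RSIE {P : Type*} [Fintype P] [DecidableEq P]
    (𝒢 : Set (Finset P))
    (hsub : ∀ G ∈ 𝒢, ∀ H : Finset P, H ⊆ G → H ∈ 𝒢)
    (c : Finset P → ℝ) (hempty : c ∅ = 0)
    (M : P → Finset P) (hM : IsMatching 𝒢 M)
    (hopt : ∀ M', IsMatching 𝒢 M' → matchCost c M ≤ matchCost c M') :
    ∀ a b : P, M a ≠ M b → ¬ IndUnstable 𝒢 (extCost c) (M a) (M b) := by
  rintro a b hab ⟨i, hiA, hfeas, hlt, -⟩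
  classical
  obtain ⟨hfeasM, hmem, hcoord⟩ := hM
  set A := M a with hAdef
  set B := M b with hBdef
  have hjA : ∀ j, j ∈ A → M j = A := fun j hj => hcoord a j hj
  have hjB : ∀ j, j ∈ B → M j = B := fun j hj => hcoord b j hj
  have hiMA : M i = A := hjA i hiA
  have hinB : i ∉ B := fun h => hab (hiMA.symm.trans (hjB i h))
  have hbB : b ∈ B := hmem b
  have hiBA : insert i B ≠ A := by
    intro h
    apply hab
    have hbA : b ∈ A := h ▸ (Finset.mem_insert_of_mem hbB)
    exact (hjA b hbA).symm.trans (hjB b hbB)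
  -- define the deviating matching
  set M' : P → Finset P := fun j =>
    if j = i then insert i B
    else if M j = A then A.erase i
    else if M j = B then insert i B else M j with hM'def
  have hM'i : M' i = insert i B := by simp [hM'def]
  have hM'A : ∀ j, j ≠ i → M j = A → M' j = A.erase i := by
    intro j hj hja; simp [hM'def, hj, hja]
  have hM'B : ∀ j, M j = B → M' j = insert i B := by
    intro j hjb
    have hji : j ≠ i := by rintro rfl; exact hab (hiMA.symm.trans hjb)
    have hne : B ≠ A := fun h => hab h.symm
    simp [hM'def, hji, hjb, hne]
  have hM'o : ∀ j, M j ≠ A → M j ≠ B → M' j = M j := by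
    intro j h1 h2
    have hji : j ≠ i := by rintro rfl; exact h1 hiMA
    simp [hM'def, hji, h1, h2]
  -- M' is a matching
  have hM' : IsMatching 𝒢 M' := by
    refine ⟨?_, ?_, ?_⟩
    · intro j
      by_cases hji : j = i
      · subst hji; rw [hM'i]; exact hfeas
      · by_cases h1 : M j = A
        · rw [hM'A j hji h1]; exact hsub A (hfeasM a) _ (Finset.erase_subset _ _)
        · by_cases h2 : M j = B
          · rw [hM'B j h2]; exact hfeas
          · rw [hM'o j h1 h2]; exact hfeasM j
    · intro j
      by_cases hji : j = i
      · subst hji; rw [hM'i]; exact Finset.mem_insert_self _ _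
      · by_cases h1 : M j = A
        · rw [hM'A j hji h1]
          exact Finset.mem_erase.2 ⟨hji, h1 ▸ hmem j⟩
        · by_cases h2 : M j = B
          · rw [hM'B j h2]; exact Finset.mem_insert_of_mem (h2 ▸ hmem j)
          · rw [hM'o j h1 h2]; exact hmem j
    · intro j k hk
      by_cases hji : j = i
      · subst hji
        rw [hM'i] at hk ⊢
        rcases Finset.mem_insert.1 hk with rfl | hkB
        · exact hM'i
        · exact hM'B k (hjB k hkB)
      · by_cases h1 : M j = A
        · rw [hM'A j hji h1] at hk ⊢
          obtain ⟨hki, hkA⟩ := Finset.mem_erase.1 hk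
          exact hM'A k hki (hjA k hkA)
        · by_cases h2 : M j = B
          · rw [hM'B j h2] at hk ⊢
            rcases Finset.mem_insert.1 hk with rfl | hkB
            · exact hM'i
            · exact hM'B k (hjB k hkB)
          · rw [hM'o j h1 h2] at hk ⊢
            have hkj : M k = M j := hcoord j k hk
            exact hkj ▸ hM'o k (hkj ▸ h1) (hkj ▸ h2)
  -- image decomposition of M
  set S := Finset.univ.image M with hSdef
  set R := (S.erase A).erase B with hRdef
  have hAS : A ∈ S := Finset.mem_image_of_mem M (Finset.mem_univ a)
  have hBS : B ∈ (S.erase A) := Finset.mem_erase.2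
    ⟨fun h => hab h.symm, Finset.mem_image_of_mem M (Finset.mem_univ b)⟩
  have hsumM : matchCost c M = c A + c B + ∑ G ∈ R, c G := by
    rw [matchCost, ← hSdef, ← Finset.add_sum_erase S c hAS,
      ← Finset.add_sum_erase _ c hBS, hRdef]
    ring
  -- new groups are not in S
  have hinsS : insert i B ∉ S := by
    intro h
    obtain ⟨k, -, hk⟩ := Finset.mem_image.1 h
    have : M i = insert i B := (hcoord k i (hk.symm ▸ Finset.mem_insert_self i B)).trans hk
    exact hiBA (hiMA ▸ this.symm ▸ rfl)
  have heraS : A.erase i ∉ S := by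
    intro h
    obtain ⟨k, -, hk⟩ := Finset.mem_image.1 h
    rcases Finset.eq_empty_or_nonempty (A.erase i) with he | ⟨j, hj⟩
    · have hkm : k ∈ A.erase i := hk ▸ hmem k
      rw [he] at hkm
      exact Finset.notMem_empty k hkm
    · obtain ⟨hjine, hjA'⟩ := Finset.mem_erase.1 hj
      have h1 : M j = A.erase i := (hcoord k j (hk.symm ▸ hj)).trans hk
      have h2 : A = A.erase i := (hjA j hjA').symm.trans h1
      exact (Finset.mem_erase.1 (h2 ▸ hiA)).1 rfl
  have hRS : R ⊆ S := (Finset.erase_subset _ _).trans (Finset.erase_subset _ _)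
  -- image of M'
  have himg : ∀ j, M' j = insert i B ∨ M' j = A.erase i ∨ M' j ∈ R := by
    intro j
    by_cases hji : j = i
    · left; subst hji; exact hM'i
    · by_cases h1 : M j = A
      · right; left; exact hM'A j hji h1
      · by_cases h2 : M j = B
        · left; exact hM'B j h2
        · right; right; rw [hM'o j h1 h2, hRdef]
          exact Finset.mem_erase.2 ⟨h2, Finset.mem_erase.2
            ⟨h1, Finset.mem_image_of_mem M (Finset.mem_univ j)⟩⟩
  have hRimg : ∀ G ∈ R, ∃ j, M' j = G := by
    intro G hG
    obtain ⟨h2, hG'⟩ := Finset.mem_erase.1 hG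
    obtain ⟨h1, hGS⟩ := Finset.mem_erase.1 hG'
    obtain ⟨j, -, hj⟩ := Finset.mem_image.1 hGS
    exact ⟨j, (hM'o j (hj.symm ▸ h1) (hj.symm ▸ h2)).trans hj⟩
  have hinsR : insert i B ∉ R := fun h => hinsS (hRS h)
  have heraR : A.erase i ∉ R := fun h => heraS (hRS h)
  -- cost of M'
  have hsumM' : matchCost c M' = c (A.erase i) + c (insert i B) + ∑ G ∈ R, c G := by
    rcases Finset.eq_empty_or_nonempty (A.erase i) with he | ⟨j0, hj0⟩
    · -- A = {i}: the group A.erase i = ∅ disappears, but its cost is 0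
      have hT : Finset.univ.image M' = insert (insert i B) R := by
        apply Finset.ext; intro G
        simp only [Finset.mem_image, Finset.mem_insert, Finset.mem_univ, true_and]
        constructor
        · rintro ⟨j, rfl⟩
          rcases himg j with h | h | h
          · left; exact h
          · exfalso
            have hjm : j ∈ M' j := hM'.2.1 j
            rw [h, he] at hjm
            exact Finset.notMem_empty j hjm
          · right; exact h
        · rintro (rfl | hG)
          · exact ⟨i, hM'i⟩
          · exact hRimg G hG
      rw [matchCost, hT, Finset.sum_insert hinsR, he, hempty]
      ring
    · have hj0' := Finset.mem_erase.1 hj0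
      have hT : Finset.univ.image M' = insert (A.erase i) (insert (insert i B) R) := by
        apply Finset.ext; intro G
        simp only [Finset.mem_image, Finset.mem_insert, Finset.mem_univ, true_and]
        constructor
        · rintro ⟨j, rfl⟩
          rcases himg j with h | h | h
          · right; left; exact h
          · left; exact h
          · right; right; exact h
        · rintro (rfl | rfl | hG)
          · exact ⟨j0, hM'A j0 hj0'.1 (hjA j0 hj0'.2)⟩
          · exact ⟨i, hM'i⟩
          · exact hRimg G hG
      have hne1 : A.erase i ∉ insert (insert i B) R := by
        intro h
        rcases Finset.mem_insert.1 h with h | h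
        · exact (Finset.mem_erase.1 (h ▸ Finset.mem_insert_self i B)).1 rfl
        · exact heraR h
      rw [matchCost, hT, Finset.sum_insert hne1, Finset.sum_insert hinsR]
      ring
  -- conclude
  have hkey := hopt M' hM'
  have hlt' : c (insert i B) - c B < c A - c (A.erase i) := by
    have := hlt
    rw [extCost, extCost, Finset.erase_insert hinB] at this
    exact this
  rw [hsumM, hsumM'] at hkey
  linarith
end

section
/- Adding a uniform constant D ≥ max_{H∈𝒢} c(H) to the externality-based costs, i.e., c_i(G) = c(G) − c(G\{i}) + D, yields an overcharging protocol (∑_{i∈G} c_i(G) ≥ c(G) for every G ∈ 𝒢), and every optimal matching remains a RSIE under these shifted costs. -/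
open Finset

private lemma sum_insert_le'' {α : Type*} [DecidableEq α] (f : α → ℝ) (x : α) (s : Finset α)
    (hx : 0 ≤ f x) : ∑ y ∈ insert x s, f y ≤ f x + ∑ y ∈ s, f y := by
  by_cases h : x ∈ s
  · rw [Finset.insert_eq_self.2 h]; linarith
  · rw [Finset.sum_insert h]

/-- Shifted externality-based protocol: `c_i(G) = c(G) − c(G \ {i}) + D`. -/
noncomputable def extCostShift {P : Type*} [DecidableEq P]
    (c : Finset P → ℝ) (D : ℝ) (i : P) (G : Finset P) : ℝ :=
  c G - c (G.erase i) + D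

/-- Adding a uniform constant `D ≥ max_H c(H)` to the externality-based costs yields an
overcharging protocol (`∑_{i∈G} c_i(G) ≥ c(G)` for every feasible `G`), and every optimal
matching remains a Ridepooling Semi-Individual Equilibrium under these shifted costs. -/
theorem shifted_externality_overcharging_and_RSIE {P : Type*} [Fintype P] [DecidableEq P]
    (𝒢 : Set (Finset P))
    (hsub : ∀ G ∈ 𝒢, ∀ H : Finset P, H ⊆ G → H ∈ 𝒢)
    (c : Finset P → ℝ)
    (hnonneg : ∀ G ∈ 𝒢, 0 ≤ c G)
    (hmono : ∀ G ∈ 𝒢, ∀ H : Finset P, H ⊆ G → c H ≤ c G)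
    (hempty : c ∅ = 0)
    (D : ℝ) (hD : ∀ H ∈ 𝒢, c H ≤ D) :
    (∀ G ∈ 𝒢, c G ≤ ∑ i ∈ G, extCostShift c D i G) ∧
      ∀ M : P → Finset P, IsMatching 𝒢 M →
        (∀ M', IsMatching 𝒢 M' → matchCost c M ≤ matchCost c M') →
        ∀ a b : P, M a ≠ M b → ¬ IndUnstable 𝒢 (extCostShift c D) (M a) (M b) := by
  constructor
  · intro G hG
    rcases G.eq_empty_or_nonempty with rfl | ⟨i, hi⟩
    · simp [hempty]
    · have hemp : (∅ : Finset P) ∈ 𝒢 := hsub G hG ∅ (Finset.empty_subset _)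
      have hD0 : 0 ≤ D := hempty ▸ hD ∅ hemp
      have h1 : c G ≤ extCostShift c D i G := by
        have := hD _ (hsub G hG _ (Finset.erase_subset i G))
        unfold extCostShift; linarith
      have h2 : 0 ≤ ∑ j ∈ G.erase i, extCostShift c D j G := by
        apply Finset.sum_nonneg
        intro j hj
        have := hmono G hG _ (Finset.erase_subset j G)
        unfold extCostShift; linarith
      calc c G ≤ extCostShift c D i G + ∑ j ∈ G.erase i, extCostShift c D j G := by linarith
        _ = ∑ j ∈ G, extCostShift c D j G := Finset.add_sum_erase G (fun j => extCostShift c D j G) hi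
  · intro M hM hopt a b hab hUnst
    obtain ⟨hMfeas, hMmem, hMcoord⟩ := hM
    obtain ⟨i, hiMa, hfeas, hlt, -⟩ := hUnst
    have hMi : M i = M a := hMcoord a i hiMa
    have hiMb : i ∉ M b := fun h => hab (hMi.symm.trans (hMcoord b i h))
    have herase : (insert i (M b)).erase i = M b := Finset.erase_insert hiMb
    have key : c (insert i (M b)) + c ((M a).erase i) < c (M a) + c (M b) := by
      unfold extCostShift at hlt; rw [herase] at hlt; linarith
    set M' : P → Finset P := fun j =>
      if j ∈ insert i (M b) then insert i (M b)
      else if M j = M a then (M a).erase i else M j with hM'def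
    have hM'1 : ∀ j, j ∈ insert i (M b) → M' j = insert i (M b) := by
      intro j hj; simp only [hM'def, if_pos hj]
    have hM'2 : ∀ j, j ∉ insert i (M b) → M j = M a → M' j = (M a).erase i := by
      intro j hj hj2; simp only [hM'def, if_neg hj, if_pos hj2]
    have hM'3 : ∀ j, j ∉ insert i (M b) → M j ≠ M a → M' j = M j := by
      intro j hj hj2; simp only [hM'def, if_neg hj, if_neg hj2]
    have hM' : IsMatching 𝒢 M' := by
      refine ⟨?_, ?_, ?_⟩
      · intro j
        by_cases h1 : j ∈ insert i (M b)
        · rw [hM'1 j h1]; exact hfeas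
        by_cases h2 : M j = M a
        · rw [hM'2 j h1 h2]; exact hsub _ (hMfeas a) _ (Finset.erase_subset _ _)
        · rw [hM'3 j h1 h2]; exact hMfeas j
      · intro j
        by_cases h1 : j ∈ insert i (M b)
        · rw [hM'1 j h1]; exact h1
        by_cases h2 : M j = M a
        · rw [hM'2 j h1 h2]
          refine Finset.mem_erase.2 ⟨?_, h2 ▸ hMmem j⟩
          rintro rfl; exact h1 (Finset.mem_insert_self _ _)
        · rw [hM'3 j h1 h2]; exact hMmem j
      · intro j k hk
        by_cases h1 : j ∈ insert i (M b)
        · rw [hM'1 j h1] at hk ⊢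
          exact hM'1 k hk
        by_cases h2 : M j = M a
        · rw [hM'2 j h1 h2] at hk ⊢
          have hki : k ≠ i := (Finset.mem_erase.1 hk).1
          have hkMa : k ∈ M a := (Finset.mem_erase.1 hk).2
          have hMk : M k = M a := hMcoord a k hkMa
          have hkb : k ∉ insert i (M b) := by
            intro h
            rcases Finset.mem_insert.1 h with h | h
            · exact hki h
            · exact hab (hMk.symm.trans (hMcoord b k h))
          exact hM'2 k hkb hMk
        · rw [hM'3 j h1 h2] at hk ⊢
          have hMk : M k = M j := hMcoord j k hk
          have hki : k ≠ i := by
            rintro rfl; exact h2 (hMk.symm.trans hMi)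
          have hkb : k ∉ insert i (M b) := by
            intro h
            rcases Finset.mem_insert.1 h with h | h
            · exact hki h
            · have hMkb : M k = M b := hMcoord b k h
              apply h1
              exact Finset.mem_insert_of_mem ((hMk.symm.trans hMkb) ▸ hMmem j)
          have hk2 : M k ≠ M a := by rw [hMk]; exact h2
          rw [hM'3 k hkb hk2, hMk]
    set S : Finset (Finset P) := Finset.univ.image M with hSdef
    have hMaS : M a ∈ S := Finset.mem_image_of_mem M (Finset.mem_univ a)
    have hMbS : M b ∈ S.erase (M a) :=
      Finset.mem_erase.2 ⟨Ne.symm hab, Finset.mem_image_of_mem M (Finset.mem_univ b)⟩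
    set R : ℝ := ∑ x ∈ (S.erase (M a)).erase (M b), c x with hRdef
    have hcostM : matchCost c M = c (M a) + c (M b) + R := by
      rw [matchCost, ← hSdef, ← Finset.add_sum_erase S c hMaS,
        ← Finset.add_sum_erase _ c hMbS, hRdef]
      ring
    set T : Finset (Finset P) :=
      insert (insert i (M b)) (insert ((M a).erase i) ((S.erase (M a)).erase (M b))) with hTdef
    have hT𝒢 : ∀ x ∈ T, x ∈ 𝒢 := by
      intro x hx
      rcases Finset.mem_insert.1 hx with rfl | hx
      · exact hfeas
      rcases Finset.mem_insert.1 hx with rfl | hx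
      · exact hsub _ (hMfeas a) _ (Finset.erase_subset _ _)
      · have hxS : x ∈ S := Finset.mem_of_mem_erase (Finset.mem_of_mem_erase hx)
        obtain ⟨k, -, rfl⟩ := Finset.mem_image.1 hxS
        exact hMfeas k
    have hsubT : Finset.univ.image M' ⊆ T := by
      intro x hx
      obtain ⟨j, -, rfl⟩ := Finset.mem_image.1 hx
      by_cases h1 : j ∈ insert i (M b)
      · rw [hM'1 j h1]; exact Finset.mem_insert_self _ _
      by_cases h2 : M j = M a
      · rw [hM'2 j h1 h2]
        exact Finset.mem_insert_of_mem (Finset.mem_insert_self _ _)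
      · rw [hM'3 j h1 h2]
        have hjb : M j ≠ M b := by
          intro h; exact h1 (Finset.mem_insert_of_mem (h ▸ hMmem j))
        exact Finset.mem_insert_of_mem (Finset.mem_insert_of_mem
          (Finset.mem_erase.2 ⟨hjb, Finset.mem_erase.2
            ⟨h2, Finset.mem_image_of_mem M (Finset.mem_univ j)⟩⟩))
    have hcostM' : matchCost c M' < matchCost c M := by
      have step1 : matchCost c M' ≤ ∑ x ∈ T, c x := by
        rw [matchCost]
        exact Finset.sum_le_sum_of_subset_of_nonneg hsubT
          (fun x hx _ => hnonneg x (hT𝒢 x hx))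
      have step2 : ∑ x ∈ T, c x ≤ c (insert i (M b)) + (c ((M a).erase i) + R) := by
        rw [hTdef]
        calc ∑ x ∈ insert (insert i (M b))
              (insert ((M a).erase i) ((S.erase (M a)).erase (M b))), c x
            ≤ c (insert i (M b)) +
              ∑ x ∈ insert ((M a).erase i) ((S.erase (M a)).erase (M b)), c x :=
              sum_insert_le'' c _ _ (hnonneg _ hfeas)
          _ ≤ c (insert i (M b)) + (c ((M a).erase i) + R) := by
              have := sum_insert_le'' c ((M a).erase i) ((S.erase (M a)).erase (M b))
                (hnonneg _ (hsub _ (hMfeas a) _ (Finset.erase_subset _ _)))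
              linarith
      rw [hcostM]; linarith
    exact absurd (hopt M' hM') (not_le.2 hcostM')
end

section
/- Under any residual-based protocol, every matching minimizing total group cost is a Ridepooling Unmergeable Equilibrium: it is a TNE (each player's cost is at most her solo cost) and contains no pair of mergeable groups. -/
open Finset

/-- Residual cost of a group: `Δc(G) = c(G) − ∑_{i∈G} c({i})`. -/
noncomputable def residualCost {P : Type*} [DecidableEq P]
    (c : Finset P → ℝ) (G : Finset P) : ℝ :=
  c G - ∑ i ∈ G, c ({i} : Finset P)

/-- Under any residualCost-based protocol (`c_i(G) = c({i}) + p(i,G)` with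
`∑_{i∈G} p(i,G) = Δc(G)` and all `p(i,G)` of the same sign as `Δc(G)`),
every matching minimizing total group cost is a Ridepooling Unmergeable Equilibrium:
it is a TNE and contains no pair of mergeable groups. -/
theorem residual_optimal_is_RUE {P : Type*} [Fintype P] [DecidableEq P]
    (𝒢 : Set (Finset P))
    (hsingle : ∀ i : P, ({i} : Finset P) ∈ 𝒢)
    (c : Finset P → ℝ) (p : P → Finset P → ℝ)
    (hsum : ∀ G ∈ 𝒢, ∑ i ∈ G, p i G = residualCost c G)
    (hsign : ∀ G ∈ 𝒢, ∀ i ∈ G,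
      (residualCost c G ≤ 0 → p i G ≤ 0) ∧ (0 ≤ residualCost c G → 0 ≤ p i G))
    (ci : P → Finset P → ℝ)
    (hci : ∀ G : Finset P, ∀ i ∈ G, ci i G = c ({i} : Finset P) + p i G)
    (M : P → Finset P) (hM : IsMatching 𝒢 M)
    (hopt : ∀ M', IsMatching 𝒢 M' → matchCost c M ≤ matchCost c M') :
    (∀ i, ci i (M i) ≤ ci i ({i} : Finset P)) ∧
      ∀ a b : P, M a ≠ M b → ¬ Mergeable 𝒢 ci M (M a) (M b) := by
  obtain ⟨hMg, hMmem, hMcoord⟩ := hM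
  -- sum of individual costs over a feasible group equals the group cost
  have hsumci : ∀ G ∈ 𝒢, ∑ i ∈ G, ci i G = c G := by
    intro G hG
    have h1 : ∑ i ∈ G, ci i G = ∑ i ∈ G, (c ({i} : Finset P) + p i G) :=
      Finset.sum_congr rfl (fun i hi => hci G i hi)
    rw [h1, Finset.sum_add_distrib, hsum G hG]
    unfold residualCost
    ring
  -- split lemma: the group of each player in the optimal matching has
  -- cost at most the sum of singleton costs
  have hsplit : ∀ i₀ : P, c (M i₀) ≤ ∑ j ∈ M i₀, c ({j} : Finset P) := by
    intro i₀
    set G₀ := M i₀ with hG₀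
    have hmemG₀ : ∀ j ∈ G₀, M j = G₀ := fun j hj => hMcoord i₀ j hj
    set N : P → Finset P := fun j => if j ∈ G₀ then ({j} : Finset P) else M j with hN
    have hNmatch : IsMatching 𝒢 N := by
      refine ⟨?_, ?_, ?_⟩
      · intro i; by_cases h : i ∈ G₀ <;> simp [hN, h, hsingle, hMg]
      · intro i; by_cases h : i ∈ G₀ <;> simp [hN, h, hMmem]
      · intro i j hj
        by_cases hi : i ∈ G₀
        · simp only [hN, if_pos hi, Finset.mem_singleton] at hj
          subst hj; rfl
        · simp only [hN, if_neg hi] at hj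
          have hji : M j = M i := hMcoord i j hj
          have hjG : j ∉ G₀ := by
            intro hjG
            apply hi
            have h1 : G₀ = M i := (hmemG₀ j hjG).symm.trans hji
            rw [h1]; exact hMmem i
          simp only [hN, if_neg hi, if_neg hjG, hji]
    have himg : Finset.univ.image N =
        G₀.image (fun j => ({j} : Finset P)) ∪ (Finset.univ.image M).erase G₀ := by
      ext G
      simp only [Finset.mem_image, Finset.mem_union, Finset.mem_erase, Finset.mem_univ,
        true_and]
      constructor
      · rintro ⟨j, rfl⟩
        by_cases hj : j ∈ G₀
        · left; exact ⟨j, hj, by simp [hN, hj]⟩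
        · right
          have hNj : N j = M j := by simp [hN, hj]
          rw [hNj]
          exact ⟨fun h => hj (h ▸ hMmem j), ⟨j, rfl⟩⟩
      · rintro (⟨j, hj, rfl⟩ | ⟨hne, j, rfl⟩)
        · exact ⟨j, by simp [hN, hj]⟩
        · have hj : j ∉ G₀ := fun hj => hne (hmemG₀ j hj)
          exact ⟨j, by simp [hN, hj]⟩
    have hdisj2 : Disjoint (G₀.image (fun j => ({j} : Finset P)))
        ((Finset.univ.image M).erase G₀) := by
      rw [Finset.disjoint_left]
      intro G hG1 hG2
      simp only [Finset.mem_image] at hG1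
      obtain ⟨j, hj, rfl⟩ := hG1
      obtain ⟨hne, hG2'⟩ := Finset.mem_erase.mp hG2
      simp only [Finset.mem_image, Finset.mem_univ, true_and] at hG2'
      obtain ⟨k, hk⟩ := hG2'
      have hjk : j ∈ M k := by rw [hk]; exact Finset.mem_singleton_self j
      have hMj : M j = ({j} : Finset P) := (hMcoord k j hjk).trans hk
      exact hne (hMj.symm.trans (hmemG₀ j hj))
    have hcostN : matchCost c N =
        (∑ j ∈ G₀, c ({j} : Finset P)) + ∑ G ∈ (Finset.univ.image M).erase G₀, c G := by
      rw [matchCost, himg, Finset.sum_union hdisj2,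
        Finset.sum_image (fun a _ b _ h => Finset.singleton_inj.mp h)]
    have hG₀mem : G₀ ∈ Finset.univ.image M :=
      Finset.mem_image_of_mem M (Finset.mem_univ i₀)
    have hcostM : matchCost c M = c G₀ + ∑ G ∈ (Finset.univ.image M).erase G₀, c G := by
      rw [matchCost, ← Finset.add_sum_erase _ c hG₀mem]
    have hle := hopt N hNmatch
    rw [hcostM, hcostN] at hle
    linarith
  -- TNE part
  have hTNE : ∀ i, ci i (M i) ≤ ci i ({i} : Finset P) := by
    intro i
    have hres : residualCost c (M i) ≤ 0 := by
      have := hsplit i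
      unfold residualCost; linarith
    have hp : p i (M i) ≤ 0 := (hsign (M i) (hMg i) i (hMmem i)).1 hres
    have hpi : p i ({i} : Finset P) = 0 := by
      have h1 := hsum {i} (hsingle i)
      simp [residualCost] at h1
      exact h1
    rw [hci (M i) i (hMmem i), hci {i} i (Finset.mem_singleton_self i), hpi]
    linarith
  refine ⟨hTNE, ?_⟩
  intro a b hab hmerge
  obtain ⟨hdj, hU, hweak, i₀, hi₀, hstrict⟩ := hmerge
  set U := M a ∪ M b with hUdef
  have hMa : ∀ i ∈ M a, M i = M a := fun i hi => hMcoord a i hi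
  have hMb : ∀ i ∈ M b, M i = M b := fun i hi => hMcoord b i hi
  have hlt : ∑ i ∈ U, ci i U < ∑ i ∈ U, ci i (M i) :=
    Finset.sum_lt_sum hweak ⟨i₀, hi₀, hstrict⟩
  have hL : ∑ i ∈ U, ci i U = c U := hsumci U hU
  have hR : ∑ i ∈ U, ci i (M i) = c (M a) + c (M b) := by
    rw [hUdef, Finset.sum_union hdj,
      Finset.sum_congr rfl (fun i hi => by rw [hMa i hi]),
      Finset.sum_congr (rfl : M b = M b) (fun i hi => by rw [hMb i hi]),
      hsumci (M a) (hMg a), hsumci (M b) (hMg b)]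
  rw [hL, hR] at hlt
  -- build the merged matching
  set N : P → Finset P := fun j => if j ∈ U then U else M j with hN
  have hNmatch : IsMatching 𝒢 N := by
    refine ⟨?_, ?_, ?_⟩
    · intro i; by_cases h : i ∈ U <;> simp [hN, h, hU, hMg]
    · intro i; by_cases h : i ∈ U <;> simp [hN, h, hMmem]
    · intro i j hj
      by_cases hi : i ∈ U
      · simp only [hN, if_pos hi] at hj
        simp only [hN, if_pos hi, if_pos hj]
      · simp only [hN, if_neg hi] at hj
        have hji : M j = M i := hMcoord i j hj
        have hjU : j ∉ U := by
          intro hjU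
          apply hi
          rw [hUdef, Finset.mem_union] at hjU ⊢
          rcases hjU with h | h
          · left; rw [← hMa j h, hji]; exact hMmem i
          · right; rw [← hMb j h, hji]; exact hMmem i
        simp only [hN, if_neg hi, if_neg hjU, hji]
  have hnotU : ∀ j, j ∉ U → M j ≠ M a ∧ M j ≠ M b := by
    intro j hj
    constructor
    · intro h; apply hj; rw [hUdef, Finset.mem_union]; left; rw [← h]; exact hMmem j
    · intro h; apply hj; rw [hUdef, Finset.mem_union]; right; rw [← h]; exact hMmem j
  have himg : Finset.univ.image N =
      insert U (((Finset.univ.image M).erase (M a)).erase (M b)) := by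
    ext G
    simp only [Finset.mem_image, Finset.mem_insert, Finset.mem_erase, Finset.mem_univ,
      true_and]
    constructor
    · rintro ⟨j, rfl⟩
      by_cases hj : j ∈ U
      · left; simp [hN, hj]
      · right
        have hNj : N j = M j := by simp [hN, hj]
        rw [hNj]
        exact ⟨(hnotU j hj).2, (hnotU j hj).1, j, rfl⟩
    · rintro (rfl | ⟨hb', ha', j, rfl⟩)
      · refine ⟨a, ?_⟩
        have haU : a ∈ U := by
          rw [hUdef]; exact Finset.mem_union_left _ (hMmem a)
        simp [hN, haU]
      · have hj : j ∉ U := by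
          intro hjU
          rw [hUdef, Finset.mem_union] at hjU
          rcases hjU with h | h
          · exact ha' (hMa j h)
          · exact hb' (hMb j h)
        exact ⟨j, by simp [hN, hj]⟩
  have hUnot : U ∉ ((Finset.univ.image M).erase (M a)).erase (M b) := by
    intro h
    obtain ⟨hb', h2⟩ := Finset.mem_erase.mp h
    obtain ⟨ha', h3⟩ := Finset.mem_erase.mp h2
    simp only [Finset.mem_image, Finset.mem_univ, true_and] at h3
    obtain ⟨k, hk⟩ := h3
    have hkU : k ∈ U := hk ▸ hMmem k
    rw [hUdef, Finset.mem_union] at hkU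
    rcases hkU with h | h
    · exact ha' (hk.symm.trans (hMa k h))
    · exact hb' (hk.symm.trans (hMb k h))
  have hcostN : matchCost c N =
      c U + ∑ G ∈ ((Finset.univ.image M).erase (M a)).erase (M b), c G := by
    rw [matchCost, himg, Finset.sum_insert hUnot]
  have hMamem : M a ∈ Finset.univ.image M := Finset.mem_image_of_mem M (Finset.mem_univ a)
  have hMbmem : M b ∈ (Finset.univ.image M).erase (M a) :=
    Finset.mem_erase.mpr ⟨hab.symm, Finset.mem_image_of_mem M (Finset.mem_univ b)⟩
  have hcostM : matchCost c M =
      c (M a) + (c (M b) + ∑ G ∈ ((Finset.univ.image M).erase (M a)).erase (M b), c G) := by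
    rw [matchCost, ← Finset.add_sum_erase _ c hMamem, ← Finset.add_sum_erase _ c hMbmem]
  have hle := hopt N hNmatch
  rw [hcostM, hcostN] at hle
  linarith
end

section
/- For the subgroup-based algorithm, the sum of the subgroup-based costs over a group is at least the group's total cost whenever every partition of G into feasible subsets costs at least c(G): specifically, ∑_{i∈G} z_i(G) = ∑_j c(φ^j), where φ^1,…,φ^Q are the distinct associated subgroups (a partition of G); hence if G belongs to an optimal matching, then ∑_{i∈G} z_i(G) ≥ c(G), i.e., the excess e(G) = c(G) − ∑_{i∈G} z_i(G) is nonpositive. -/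
open Finset

/-- The greedy step of the subgroup-based algorithm: among all nonempty subsets of the
remaining set `W`, pick one minimizing the average cost `c(J)/|J|`. -/
noncomputable def pick {P : Type*} [DecidableEq P] (c : Finset P → ℝ) (W : Finset P) :
    Finset P :=
  if h : W.Nonempty then
    (Finset.exists_min_image (W.powerset.filter (fun J => J.Nonempty))
      (fun J => c J / (J.card : ℝ))
      ⟨W, Finset.mem_filter.mpr ⟨Finset.mem_powerset.mpr (Finset.Subset.refl W), h⟩⟩).choose
  else ∅

lemma pick_spec {P : Type*} [DecidableEq P] (c : Finset P → ℝ) {W : Finset P}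
    (h : W.Nonempty) :
    pick c W ⊆ W ∧ (pick c W).Nonempty ∧
      ∀ J ⊆ W, J.Nonempty → c (pick c W) / ((pick c W).card : ℝ) ≤ c J / (J.card : ℝ) := by
  have hs := (Finset.exists_min_image (W.powerset.filter (fun J => J.Nonempty))
      (fun J => c J / (J.card : ℝ))
      ⟨W, Finset.mem_filter.mpr ⟨Finset.mem_powerset.mpr (Finset.Subset.refl W), h⟩⟩).choose_spec
  rw [pick, dif_pos h]
  refine ⟨?_, ?_, ?_⟩
  · exact Finset.mem_powerset.mp (Finset.mem_filter.mp hs.1).1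
  · exact (Finset.mem_filter.mp hs.1).2
  · intro J hJ hJne
    exact hs.2 J (Finset.mem_filter.mpr ⟨Finset.mem_powerset.mpr hJ, hJne⟩)

/-- The associated subgroup `φ_i(W)` produced by the subgroup-based algorithm on the
remaining set `W`: the greedy piece containing `i`. -/
noncomputable def phi {P : Type*} [DecidableEq P] (c : Finset P → ℝ) (W : Finset P)
    (i : P) : Finset P :=
  if h : W.Nonempty then
    if i ∈ pick c W then pick c W else phi c (W \ pick c W) i
  else ∅
termination_by W.card
decreasing_by
  exact Finset.card_lt_card
    (Finset.sdiff_ssubset (pick_spec c h).1 (pick_spec c h).2.1)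

/-- Subgroup-based cost of player `i` in group `G`: the average cost of her associated
subgroup, `z_i(G) = c(φ_i(G)) / |φ_i(G)|`. -/
noncomputable def zCost {P : Type*} [DecidableEq P] (c : Finset P → ℝ) (G : Finset P)
    (i : P) : ℝ :=
  c (phi c G i) / ((phi c G i).card : ℝ)

lemma phi_spec {P : Type*} [DecidableEq P] (c : Finset P → ℝ) :
    ∀ W : Finset P, ∀ i ∈ W, i ∈ phi c W i ∧ phi c W i ⊆ W ∧
      ∀ j ∈ phi c W i, phi c W j = phi c W i := by
  intro W
  induction W using Finset.strongInduction with
  | _ W ih =>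
    intro i hi
    have hW : W.Nonempty := ⟨i, hi⟩
    obtain ⟨hsub, hne, _⟩ := pick_spec c hW
    by_cases hip : i ∈ pick c W
    · have hphi : phi c W i = pick c W := by rw [phi, dif_pos hW, if_pos hip]
      refine ⟨hphi ▸ hip, hphi ▸ hsub, ?_⟩
      intro j hj
      rw [hphi] at hj
      rw [phi, dif_pos hW, if_pos hj, hphi]
    · have hphi : phi c W i = phi c (W \ pick c W) i := by
        rw [phi, dif_pos hW, if_neg hip]
      have hss : W \ pick c W ⊂ W := Finset.sdiff_ssubset hsub hne
      have hi' : i ∈ W \ pick c W := Finset.mem_sdiff.mpr ⟨hi, hip⟩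
      obtain ⟨h1, h2, h3⟩ := ih _ hss i hi'
      refine ⟨hphi ▸ h1, (hphi ▸ h2).trans Finset.sdiff_subset, ?_⟩
      intro j hj
      rw [hphi] at hj
      have hj' := h2 hj
      have hjp : j ∉ pick c W := (Finset.mem_sdiff.mp hj').2
      rw [phi, dif_pos hW, if_neg hjp, hphi]
      exact h3 j hj

/-- The sum of the subgroup-based costs over a group equals the sum of the costs of the
distinct associated subgroups; hence if `G` belongs to an optimal matching (with `𝒢`
closed under subsets), then `∑_{i∈G} z_i(G) ≥ c(G)`, i.e. the excess
`e(G) = c(G) − ∑_{i∈G} z_i(G)` is nonpositive. -/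
theorem zCost_sum_eq_and_optimal_excess_nonpos {P : Type*} [Fintype P] [DecidableEq P]
    (c : Finset P → ℝ) (G : Finset P) :
    (∑ i ∈ G, zCost c G i = ∑ J ∈ G.image (fun i => phi c G i), c J) ∧
      ∀ 𝒢 : Set (Finset P), (∀ G' ∈ 𝒢, ∀ H : Finset P, H ⊆ G' → H ∈ 𝒢) →
        (∀ i : P, ({i} : Finset P) ∈ 𝒢) →
        ∀ M : P → Finset P, IsMatching 𝒢 M →
          (∀ M', IsMatching 𝒢 M' → matchCost c M ≤ matchCost c M') →
          ∀ i₀ : P, G = M i₀ → c G ≤ ∑ i ∈ G, zCost c G i := by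
  have key : ∀ J ∈ G.image (fun i => phi c G i),
      G.filter (fun i => phi c G i = J) = J ∧ J.Nonempty := by
    intro J hJ
    obtain ⟨i₀, hi₀, rfl⟩ := Finset.mem_image.mp hJ
    obtain ⟨h1, h2, h3⟩ := phi_spec c G i₀ hi₀
    constructor
    · ext j
      simp only [Finset.mem_filter]
      constructor
      · rintro ⟨hjG, hjw⟩
        have := (phi_spec c G j hjG).1
        rwa [hjw] at this
      · intro hj
        exact ⟨h2 hj, h3 j hj⟩
    · exact ⟨i₀, h1⟩
  have part1 : ∑ i ∈ G, zCost c G i = ∑ J ∈ G.image (fun i => phi c G i), c J := by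
    rw [← Finset.sum_fiberwise_of_maps_to
      (fun i hi => Finset.mem_image_of_mem (fun i => phi c G i) hi) (zCost c G)]
    refine Finset.sum_congr rfl (fun J hJ => ?_)
    obtain ⟨hfib, hne⟩ := key J hJ
    have hval : ∀ i ∈ J, zCost c G i = c J / (J.card : ℝ) := by
      intro i hi
      have hiG : i ∈ G ∧ phi c G i = J := by
        have := hfib ▸ hi
        simpa using Finset.mem_filter.mp (hfib ▸ hi)
      rw [zCost, hiG.2]
    rw [hfib, Finset.sum_congr rfl hval, Finset.sum_const, nsmul_eq_mul,
      mul_div_cancel₀]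
    exact_mod_cast Finset.card_ne_zero_of_mem hne.choose_spec
  refine ⟨part1, ?_⟩
  intro 𝒢 hdown _ M hM hopt i₀ hGM
  obtain ⟨hfeas, hmem, hcoord⟩ := hM
  have hi₀G : i₀ ∈ G := hGM ▸ hmem i₀
  have hMi : ∀ i ∈ G, M i = G := by
    intro i hi
    rw [hGM] at hi ⊢
    exact hcoord i₀ i hi
  set M' : P → Finset P := fun i => if i ∈ G then phi c G i else M i with hM'def
  have hM'G : ∀ i ∈ G, M' i = phi c G i := fun i hi => if_pos hi
  have hM'nG : ∀ i, i ∉ G → M' i = M i := fun i hi => if_neg hi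
  have hM' : IsMatching 𝒢 M' := by
    refine ⟨?_, ?_, ?_⟩
    · intro i
      by_cases hi : i ∈ G
      · rw [hM'G i hi]
        exact hdown (M i₀) (hfeas i₀) _ (hGM ▸ (phi_spec c G i hi).2.1)
      · rw [hM'nG i hi]; exact hfeas i
    · intro i
      by_cases hi : i ∈ G
      · rw [hM'G i hi]; exact (phi_spec c G i hi).1
      · rw [hM'nG i hi]; exact hmem i
    · intro i j hj
      by_cases hi : i ∈ G
      · rw [hM'G i hi] at hj ⊢
        obtain ⟨_, h2, h3⟩ := phi_spec c G i hi
        rw [hM'G j (h2 hj)]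
        exact h3 j hj
      · rw [hM'nG i hi] at hj ⊢
        have hMj : M j = M i := hcoord i j hj
        have hjG : j ∉ G := by
          intro hjG
          exact hi (by rw [← hMi j hjG, hMj]; exact hmem i)
        rw [hM'nG j hjG, hMj]
    -- end
  have hle := hopt M' hM'
  -- image decompositions
  have huniv : (Finset.univ : Finset P) = G ∪ Gᶜ := by
    simp [Finset.union_compl]
  have himM : Finset.univ.image M = {G} ∪ Gᶜ.image M := by
    rw [huniv, Finset.image_union]
    congr 1
    apply Finset.Subset.antisymm
    · intro H hH
      obtain ⟨i, hi, rfl⟩ := Finset.mem_image.mp hH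
      simp [hMi i hi]
    · intro H hH
      rw [Finset.mem_singleton] at hH
      subst hH
      exact Finset.mem_image.mpr ⟨i₀, hi₀G, hMi i₀ hi₀G⟩
  have himM' : Finset.univ.image M' = (G.image (fun i => phi c G i)) ∪ Gᶜ.image M := by
    rw [huniv, Finset.image_union]
    congr 1
    · exact Finset.image_congr (fun i hi => hM'G i hi)
    · exact Finset.image_congr (fun i hi => hM'nG i (by simpa using hi))
  have hGnotin : ∀ H ∈ Gᶜ.image M, H ∩ G = ∅ ∨ ¬ H ⊆ G := by
    intro H hH
    obtain ⟨i, hi, rfl⟩ := Finset.mem_image.mp hH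
    rw [Finset.mem_compl] at hi
    right
    intro hsub
    exact hi (hsub (hmem i))
  have hdisj1 : Disjoint ({G} : Finset (Finset P)) (Gᶜ.image M) := by
    rw [Finset.disjoint_left]
    intro K hK hK'
    rw [Finset.mem_singleton] at hK
    rw [hK] at hK'
    rcases hGnotin G hK' with h | h
    · rw [Finset.inter_self] at h
      exact absurd (h ▸ hi₀G) (Finset.notMem_empty i₀)
    · exact h (Finset.Subset.refl G)
  have hdisj2 : Disjoint (G.image (fun i => phi c G i)) (Gᶜ.image M) := by
    rw [Finset.disjoint_left]
    intro H hH hH'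
    obtain ⟨i, hi, rfl⟩ := Finset.mem_image.mp hH
    rcases hGnotin _ hH' with h | h
    · have := (phi_spec c G i hi).1
      have h2 := (phi_spec c G i hi).2.1
      have : i ∈ phi c G i ∩ G := Finset.mem_inter.mpr ⟨this, hi⟩
      rw [h] at this
      exact absurd this (Finset.notMem_empty i)
    · exact h (phi_spec c G i hi).2.1
  have hcost : matchCost c M = c G + ∑ H ∈ Gᶜ.image M, c H := by
    rw [matchCost, himM, Finset.sum_union hdisj1, Finset.sum_singleton]
  have hcost' : matchCost c M' =
      (∑ J ∈ G.image (fun i => phi c G i), c J) + ∑ H ∈ Gᶜ.image M, c H := by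
    rw [matchCost, himM', Finset.sum_union hdisj2]
  rw [hcost, hcost'] at hle
  rw [part1]
  linarith
end

section
/- Under the subgroup-based protocol, any group G with nonpositive excess is hermetic: for every feasible H ⊊ G there exists i ∈ H with c_i(H) ≥ c_i(G). In particular, choosing i ∈ H with minimal z_i(G), one has z_i(H) ≥ z_i(G) and the chain of inequalities c_i(H) ≥ min(z_i(H), c(H)/|H|) ≥ z_i(G) ≥ c_i(G) holds. -/
open Finset

/-- Excess of a group: `e(G) = c(G) − ∑_{i∈G} z_i(G)`. -/
noncomputable def excess {P : Type*} [DecidableEq P] (c : Finset P → ℝ)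
    (G : Finset P) : ℝ :=
  c G - ∑ i ∈ G, zCost c G i

/-- The subgroup-based protocol: if the excess of `G` is nonnegative it is split uniformly
on top of the `z_i(G)`; if it is negative, the costs of the most expensive pieces are
reduced towards (but never below) the average `c(G)/|G|` until budget balance, so that
`c_i(G) ≤ z_i(G)` for all `i`, `∑_{i∈G} c_i(G) = c(G)`, and each cost satisfies
`c_i(G) ≥ c(G)/|G|` or `c_i(G) = z_i(G)`. -/
def SubgroupProtocol {P : Type*} [DecidableEq P] (𝒢 : Set (Finset P))
    (c : Finset P → ℝ) (ci : P → Finset P → ℝ) : Prop :=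
  ∀ G ∈ 𝒢,
    (0 ≤ excess c G → ∀ i ∈ G, ci i G = zCost c G i + excess c G / (G.card : ℝ)) ∧
    (excess c G < 0 →
      (∑ i ∈ G, ci i G = c G) ∧
      ∀ i ∈ G, ci i G ≤ zCost c G i ∧
        (c G / (G.card : ℝ) ≤ ci i G ∨ ci i G = zCost c G i))

lemma phi_self {P : Type*} [DecidableEq P] (c : Finset P → ℝ) (W : Finset P) (i : P)
    (hi : i ∈ W) : i ∈ phi c W i ∧ phi c W i ⊆ W := by
  have hW : W.Nonempty := ⟨i, hi⟩
  obtain ⟨hsub, hne, _⟩ := pick_spec c hW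
  rw [phi, dif_pos hW]
  by_cases hip : i ∈ pick c W
  · rw [if_pos hip]; exact ⟨hip, hsub⟩
  · rw [if_neg hip]
    have hi' : i ∈ W \ pick c W := Finset.mem_sdiff.mpr ⟨hi, hip⟩
    have h := phi_self c (W \ pick c W) i hi'
    exact ⟨h.1, h.2.trans Finset.sdiff_subset⟩
termination_by W.card
decreasing_by exact Finset.card_lt_card (Finset.sdiff_ssubset hsub hne)

lemma exists_z_le {P : Type*} [DecidableEq P] (c : Finset P → ℝ) (W J : Finset P)
    (hJW : J ⊆ W) (hJ : J.Nonempty) : ∃ j ∈ J, zCost c W j ≤ c J / (J.card : ℝ) := by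
  have hW : W.Nonempty := hJ.mono hJW
  obtain ⟨hsub, hne, hmin⟩ := pick_spec c hW
  by_cases h : ∃ j ∈ J, j ∈ pick c W
  · obtain ⟨j, hjJ, hjp⟩ := h
    refine ⟨j, hjJ, ?_⟩
    rw [zCost, phi, dif_pos hW, if_pos hjp]
    exact hmin J hJW hJ
  · push_neg at h
    have hJ' : J ⊆ W \ pick c W := fun x hx => Finset.mem_sdiff.mpr ⟨hJW hx, h x hx⟩
    obtain ⟨j, hjJ, hle⟩ := exists_z_le c (W \ pick c W) J hJ' hJ
    refine ⟨j, hjJ, ?_⟩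
    rw [zCost, phi, dif_pos hW, if_neg (h j hjJ)]
    exact hle
termination_by W.card
decreasing_by exact Finset.card_lt_card (Finset.sdiff_ssubset hsub hne)

/-- Under the subgroup-based protocol, any feasible group `G` with nonpositive excess is
hermetic: for every feasible proper nonempty subset `H ⊊ G` there exists `i ∈ H` with
`c_i(H) ≥ c_i(G)`.  In particular one can choose `i ∈ H` with minimal `z_i(G)`, and then
the chain `c_i(H) ≥ min(z_i(H), c(H)/|H|) ≥ z_i(G) ≥ c_i(G)` holds. -/
theorem subgroup_nonpos_excess_hermetic {P : Type*} [DecidableEq P]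
    (𝒢 : Set (Finset P))
    (hsub : ∀ G ∈ 𝒢, ∀ H : Finset P, H ⊆ G → H ∈ 𝒢)
    (c : Finset P → ℝ) (ci : P → Finset P → ℝ)
    (hproto : SubgroupProtocol 𝒢 c ci)
    (G : Finset P) (hG : G ∈ 𝒢) (hexc : excess c G ≤ 0) :
    ∀ H ∈ 𝒢, H ⊂ G → H.Nonempty →
      ∃ i ∈ H, (∀ j ∈ H, zCost c G i ≤ zCost c G j) ∧
        ci i G ≤ zCost c G i ∧
        zCost c G i ≤ min (zCost c H i) (c H / (H.card : ℝ)) ∧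
        min (zCost c H i) (c H / (H.card : ℝ)) ≤ ci i H ∧
        ci i G ≤ ci i H := by
  intro H hH hHG hHne
  obtain ⟨i, hiH, hmin⟩ := Finset.exists_min_image H (zCost c G) hHne
  have hiG : i ∈ G := hHG.subset hiH
  have ciG_le : ci i G ≤ zCost c G i := by
    by_cases he : excess c G < 0
    · exact (((hproto G hG).2 he).2 i hiG).1
    · have he0 : excess c G = 0 := le_antisymm hexc (not_lt.mp he)
      rw [(hproto G hG).1 (le_of_eq he0.symm) i hiG, he0]
      simp
  have z_le_avgH : zCost c G i ≤ c H / (H.card : ℝ) := by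
    obtain ⟨j, hj, hle⟩ := exists_z_le c G H hHG.subset hHne
    exact (hmin j hj).trans hle
  have z_le_zH : zCost c G i ≤ zCost c H i := by
    have hphi := phi_self c H i hiH
    obtain ⟨j, hjφ, hle⟩ :=
      exists_z_le c G (phi c H i) (hphi.2.trans hHG.subset) ⟨i, hphi.1⟩
    exact (hmin j (hphi.2 hjφ)).trans hle
  have hminle : min (zCost c H i) (c H / (H.card : ℝ)) ≤ ci i H := by
    by_cases heH : excess c H < 0
    · rcases (((hproto H hH).2 heH).2 i hiH).2 with h | h
      · exact le_trans (min_le_right _ _) h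
      · rw [h]; exact min_le_left _ _
    · rw [(hproto H hH).1 (not_lt.mp heH) i hiH]
      have : (0:ℝ) ≤ excess c H / (H.card : ℝ) :=
        div_nonneg (not_lt.mp heH) (Nat.cast_nonneg _)
      calc min (zCost c H i) (c H / (H.card : ℝ)) ≤ zCost c H i := min_le_left _ _
        _ ≤ zCost c H i + excess c H / (H.card : ℝ) := le_add_of_nonneg_right this
  have hzmin : zCost c G i ≤ min (zCost c H i) (c H / (H.card : ℝ)) :=
    le_min z_le_zH z_le_avgH
  exact ⟨i, hiH, hmin, ciG_le, hzmin, hminle,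
    ciG_le.trans (hzmin.trans hminle)⟩
end

section
/- Under the subgroup-based protocol, every optimal matching is both a Ridepooling Hermetic Equilibrium and a Ridepooling Unmergeable Equilibrium. -/
open Finset

/-- A group `G` is hermetic if no feasible proper nonempty subset `H ⊊ G` wants to leave. -/
def Hermetic {P : Type*} [DecidableEq P]
    (𝒢 : Set (Finset P)) (ci : P → Finset P → ℝ) (G : Finset P) : Prop :=
  ∀ H ∈ 𝒢, H ⊂ G → H.Nonempty → ∃ i ∈ H, ci i G ≤ ci i H

section Aux

variable {P : Type*} [DecidableEq P]

lemma phi_mem (c : Finset P → ℝ) : ∀ (W : Finset P), ∀ i ∈ W, i ∈ phi c W i := by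
  intro W
  induction W using Finset.strongInduction with
  | _ W ih =>
    intro i hi
    have hW : W.Nonempty := ⟨i, hi⟩
    obtain ⟨hsub, hne, -⟩ := pick_spec c hW
    rw [phi, dif_pos hW]
    by_cases h : i ∈ pick c W
    · rw [if_pos h]; exact h
    · rw [if_neg h]
      exact ih _ (Finset.sdiff_ssubset hsub hne) i (Finset.mem_sdiff.mpr ⟨hi, h⟩)

lemma phi_subset (c : Finset P → ℝ) : ∀ (W : Finset P), ∀ i ∈ W, phi c W i ⊆ W := by
  intro W
  induction W using Finset.strongInduction with
  | _ W ih =>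
    intro i hi
    have hW : W.Nonempty := ⟨i, hi⟩
    obtain ⟨hsub, hne, -⟩ := pick_spec c hW
    rw [phi, dif_pos hW]
    by_cases h : i ∈ pick c W
    · rw [if_pos h]; exact hsub
    · rw [if_neg h]
      exact (ih _ (Finset.sdiff_ssubset hsub hne) i
        (Finset.mem_sdiff.mpr ⟨hi, h⟩)).trans Finset.sdiff_subset

lemma phi_coord (c : Finset P → ℝ) :
    ∀ (W : Finset P), ∀ i ∈ W, ∀ j ∈ phi c W i, phi c W j = phi c W i := by
  intro W
  induction W using Finset.strongInduction with
  | _ W ih =>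
    intro i hi j hj
    have hW : W.Nonempty := ⟨i, hi⟩
    obtain ⟨hsub, hne, -⟩ := pick_spec c hW
    by_cases h : i ∈ pick c W
    · have hWi : phi c W i = pick c W := by rw [phi, dif_pos hW, if_pos h]
      rw [hWi] at hj
      rw [hWi, phi, dif_pos hW, if_pos hj]
    · have hWi : phi c W i = phi c (W \ pick c W) i := by rw [phi, dif_pos hW, if_neg h]
      have hi' : i ∈ W \ pick c W := Finset.mem_sdiff.mpr ⟨hi, h⟩
      have hj' : j ∈ W \ pick c W := by
        rw [hWi] at hj
        exact phi_subset c _ i hi' hj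
      have hjp : j ∉ pick c W := (Finset.mem_sdiff.mp hj').2
      have hWj : phi c W j = phi c (W \ pick c W) j := by
        rw [phi, dif_pos hW, if_neg hjp]
      rw [hWj, hWi]
      rw [hWi] at hj
      exact ih _ (Finset.sdiff_ssubset hsub hne) i hi' j hj

lemma phi_min (c : Finset P → ℝ) :
    ∀ (W : Finset P), ∀ H ⊆ W, H.Nonempty → ∃ i ∈ H, ∀ J ⊆ H, J.Nonempty →
      zCost c W i ≤ c J / (J.card : ℝ) := by
  intro W
  induction W using Finset.strongInduction with
  | _ W ih =>
    intro H hHW hHne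
    have hW : W.Nonempty := hHne.mono hHW
    obtain ⟨hsub, hne, hmin⟩ := pick_spec c hW
    by_cases h : (H ∩ pick c W).Nonempty
    · obtain ⟨i, hi⟩ := h
      rw [Finset.mem_inter] at hi
      refine ⟨i, hi.1, fun J hJ hJne => ?_⟩
      have : phi c W i = pick c W := by rw [phi, dif_pos hW, if_pos hi.2]
      rw [zCost, this]
      exact hmin J (hJ.trans hHW) hJne
    · have hH' : H ⊆ W \ pick c W := by
        intro x hx
        refine Finset.mem_sdiff.mpr ⟨hHW hx, fun hxp => h ⟨x, Finset.mem_inter.mpr ⟨hx, hxp⟩⟩⟩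
      obtain ⟨i, hiH, hbound⟩ := ih _ (Finset.sdiff_ssubset hsub hne) H hH' hHne
      refine ⟨i, hiH, fun J hJ hJne => ?_⟩
      have hip : i ∉ pick c W := (Finset.mem_sdiff.mp (hH' hiH)).2
      have : phi c W i = phi c (W \ pick c W) i := by rw [phi, dif_pos hW, if_neg hip]
      rw [zCost, this]
      exact hbound J hJ hJne

lemma budget_balance {𝒢 : Set (Finset P)} {c : Finset P → ℝ} {ci : P → Finset P → ℝ}
    (hproto : SubgroupProtocol 𝒢 c ci) {G : Finset P} (hG : G ∈ 𝒢) (hne : G.Nonempty) :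
    ∑ i ∈ G, ci i G = c G := by
  obtain ⟨h1, h2⟩ := hproto G hG
  rcases lt_or_ge (excess c G) 0 with h | h
  · exact (h2 h).1
  · have hc : (G.card : ℝ) ≠ 0 := Nat.cast_ne_zero.mpr (Finset.card_ne_zero_of_mem hne.choose_spec)
    rw [Finset.sum_congr rfl (fun i hi => h1 h i hi), Finset.sum_add_distrib,
      Finset.sum_const, nsmul_eq_mul, ← mul_div_assoc, mul_comm,
      mul_div_assoc, div_self hc, mul_one, excess]
    ring

lemma ci_le_zCost {𝒢 : Set (Finset P)} {c : Finset P → ℝ} {ci : P → Finset P → ℝ}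
    (hproto : SubgroupProtocol 𝒢 c ci) {G : Finset P} (hG : G ∈ 𝒢)
    (he : excess c G ≤ 0) {i : P} (hi : i ∈ G) : ci i G ≤ zCost c G i := by
  obtain ⟨h1, h2⟩ := hproto G hG
  rcases lt_or_eq_of_le he with h | h
  · exact ((h2 h).2 i hi).1
  · rw [h1 h.ge i hi, h, zero_div, add_zero]

lemma hermetic_of_excess_nonpos {𝒢 : Set (Finset P)} {c : Finset P → ℝ}
    {ci : P → Finset P → ℝ} (hproto : SubgroupProtocol 𝒢 c ci)
    {G : Finset P} (hG : G ∈ 𝒢) (he : excess c G ≤ 0) :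
    Hermetic 𝒢 ci G := by
  intro H hH hHG hHne
  obtain ⟨i, hiH, hmin⟩ := phi_min c G H hHG.subset hHne
  refine ⟨i, hiH, ?_⟩
  have hiG : i ∈ G := hHG.subset hiH
  have hciG : ci i G ≤ zCost c G i := ci_le_zCost hproto hG he hiG
  have hzH : zCost c G i ≤ zCost c H i :=
    hmin (phi c H i) (phi_subset c H i hiH) ⟨i, phi_mem c H i hiH⟩
  have hHavg : zCost c G i ≤ c H / (H.card : ℝ) := hmin H Finset.Subset.rfl hHne
  obtain ⟨h1, h2⟩ := hproto H hH
  rcases lt_or_ge (excess c H) 0 with h | h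
  · obtain ⟨hle, hor⟩ := (h2 h).2 i hiH
    rcases hor with h4 | h4
    · linarith
    · rw [h4]; linarith
  · have hc : (0:ℝ) < (H.card : ℝ) := by
      exact_mod_cast Finset.card_pos.mpr hHne
    have hnn : 0 ≤ excess c H / (H.card : ℝ) := div_nonneg h hc.le
    rw [h1 h i hiH]
    linarith

lemma matchCost_eq_sum [Fintype P] (c : Finset P → ℝ) {M : P → Finset P}
    (h1 : ∀ i, i ∈ M i) (h3 : ∀ i j, j ∈ M i → M j = M i) :
    matchCost c M = ∑ i, c (M i) / ((M i).card : ℝ) := by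
  rw [matchCost]
  refine Finset.sum_image' _ (fun i _ => ?_)
  have hfib : Finset.univ.filter (fun j => M j = M i) = M i := by
    ext j
    simp only [Finset.mem_filter, Finset.mem_univ, true_and]
    constructor
    · intro h; rw [← h]; exact h1 j
    · exact h3 i j
  have hc : ((M i).card : ℝ) ≠ 0 :=
    Nat.cast_ne_zero.mpr (Finset.card_ne_zero_of_mem (h1 i))
  have : ∀ j ∈ Finset.univ.filter (fun j => M j = M i),
      c (M j) / ((M j).card : ℝ) = c (M i) / ((M i).card : ℝ) := by
    intro j hj
    rw [(Finset.mem_filter.mp hj).2]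
  rw [Finset.sum_congr rfl this, Finset.sum_const, hfib, nsmul_eq_mul,
    ← mul_div_assoc, mul_comm, mul_div_assoc, div_self hc, mul_one]

end Aux


lemma sum_div_card {P : Type*} [DecidableEq P] {G : Finset P} (hne : G.Nonempty) (x : ℝ) :
    ∑ _i ∈ G, x / (G.card : ℝ) = x := by
  have hc : (G.card : ℝ) ≠ 0 :=
    Nat.cast_ne_zero.mpr (Finset.card_ne_zero_of_mem hne.choose_spec)
  rw [Finset.sum_const, nsmul_eq_mul, ← mul_div_assoc, mul_comm, mul_div_assoc,
    div_self hc, mul_one]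

/-- Under the subgroup-based protocol, every optimal matching is both a Ridepooling
Hermetic Equilibrium (every group is hermetic) and a Ridepooling Unmergeable Equilibrium
(it is a TNE and contains no pair of mergeable groups). -/
theorem subgroup_optimal_is_RHE_and_RUE {P : Type*} [Fintype P] [DecidableEq P]
    (𝒢 : Set (Finset P))
    (hsingle : ∀ i : P, ({i} : Finset P) ∈ 𝒢)
    (hsub : ∀ G ∈ 𝒢, ∀ H : Finset P, H ⊆ G → H ∈ 𝒢)
    (c : Finset P → ℝ) (ci : P → Finset P → ℝ)
    (hproto : SubgroupProtocol 𝒢 c ci)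
    (M : P → Finset P) (hM : IsMatching 𝒢 M)
    (hopt : ∀ M', IsMatching 𝒢 M' → matchCost c M ≤ matchCost c M') :
    (∀ i, Hermetic 𝒢 ci (M i)) ∧
      (∀ i, ci i (M i) ≤ ci i ({i} : Finset P)) ∧
      ∀ a b : P, M a ≠ M b → ¬ Mergeable 𝒢 ci M (M a) (M b) := by
  obtain ⟨hfeas, hmem, hcoord⟩ := hM
  classical
  -- Step 1: every group of the optimal matching has nonpositive excess.
  have hexc : ∀ a : P, excess c (M a) ≤ 0 := by
    intro a
    set G := M a with hGdef
    have hGne : G.Nonempty := ⟨a, hmem a⟩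
    have hMG : ∀ j ∈ G, M j = G := fun j hj => hcoord a j hj
    set M' : P → Finset P := fun j => if j ∈ G then phi c G j else M j with hM'set
    have hM'def : ∀ j, M' j = if j ∈ G then phi c G j else M j := fun j => rfl
    have h1' : ∀ j, j ∈ M' j := by
      intro j
      by_cases h : j ∈ G
      · rw [hM'def, if_pos h]; exact phi_mem c G j h
      · rw [hM'def, if_neg h]; exact hmem j
    have h3' : ∀ i j, j ∈ M' i → M' j = M' i := by
      intro i j hj
      by_cases h : i ∈ G
      · rw [hM'def, if_pos h] at hj
        have hjG : j ∈ G := phi_subset c G i h hj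
        rw [hM'def j, if_pos hjG, hM'def i, if_pos h]
        exact phi_coord c G i h j hj
      · rw [hM'def, if_neg h] at hj
        have hjG : j ∉ G := by
          intro hjG
          have h2 : M i = G := (hcoord i j hj).symm.trans (hMG j hjG)
          exact h (h2 ▸ hmem i)
        rw [hM'def j, if_neg hjG, hM'def i, if_neg h]
        exact hcoord i j hj
    have hmatch' : IsMatching 𝒢 M' := by
      refine ⟨fun j => ?_, h1', h3'⟩
      by_cases h : j ∈ G
      · rw [hM'def, if_pos h]
        exact hsub G (hfeas a) _ (phi_subset c G j h)
      · rw [hM'def, if_neg h]; exact hfeas j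
    have key := hopt M' hmatch'
    rw [matchCost_eq_sum c hmem hcoord, matchCost_eq_sum c h1' h3'] at key
    have hsplit1 : ∑ i, c (M i) / ((M i).card : ℝ)
        = ∑ i ∈ G, c (M i) / ((M i).card : ℝ) + ∑ i ∈ Gᶜ, c (M i) / ((M i).card : ℝ) :=
      (Finset.sum_add_sum_compl G _).symm
    have hsplit2 : ∑ i, c (M' i) / ((M' i).card : ℝ)
        = ∑ i ∈ G, c (M' i) / ((M' i).card : ℝ) + ∑ i ∈ Gᶜ, c (M' i) / ((M' i).card : ℝ) :=
      (Finset.sum_add_sum_compl G _).symm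
    have hR : ∑ i ∈ Gᶜ, c (M' i) / ((M' i).card : ℝ)
        = ∑ i ∈ Gᶜ, c (M i) / ((M i).card : ℝ) := by
      refine Finset.sum_congr rfl fun i hi => ?_
      rw [hM'def, if_neg (Finset.mem_compl.mp hi)]
    have hL : ∑ i ∈ G, c (M i) / ((M i).card : ℝ) = c G := by
      rw [Finset.sum_congr rfl (fun i hi => by rw [hMG i hi])]
      exact sum_div_card hGne (c G)
    have hL' : ∑ i ∈ G, c (M' i) / ((M' i).card : ℝ) = ∑ i ∈ G, zCost c G i := by
      refine Finset.sum_congr rfl fun i hi => ?_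
      rw [hM'def, if_pos hi, zCost]
    rw [hsplit1, hsplit2, hR, hL, hL'] at key
    rw [excess]
    linarith
  -- Step 2: hermeticity of every group.
  have hHerm : ∀ i, Hermetic 𝒢 ci (M i) :=
    fun i => hermetic_of_excess_nonpos hproto (hfeas i) (hexc i)
  refine ⟨hHerm, ?_, ?_⟩
  · -- Step 3: TNE (singleton deviations).
    intro i
    by_cases h : M i = ({i} : Finset P)
    · rw [h]
    · have hss : ({i} : Finset P) ⊂ M i :=
        Finset.ssubset_iff_subset_ne.mpr
          ⟨Finset.singleton_subset_iff.mpr (hmem i), fun he => h he.symm⟩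
      obtain ⟨j, hj, hle⟩ := hHerm i {i} (hsingle i) hss ⟨i, Finset.mem_singleton_self i⟩
      rw [Finset.mem_singleton] at hj
      rwa [hj] at hle
  · -- Step 4: no mergeable pairs.
    rintro a b hab ⟨hdisj, hU, hweak, i0, hi0, hstrict⟩
    set G₁ := M a with hG1def
    set G₂ := M b with hG2def
    set U := G₁ ∪ G₂ with hUdef
    have hG1ne : G₁.Nonempty := ⟨a, hmem a⟩
    have hG2ne : G₂.Nonempty := ⟨b, hmem b⟩
    have hUne : U.Nonempty := hG1ne.mono Finset.subset_union_left
    have hMG1 : ∀ j ∈ G₁, M j = G₁ := fun j hj => hcoord a j hj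
    have hMG2 : ∀ j ∈ G₂, M j = G₂ := fun j hj => hcoord b j hj
    have hsum1 : ∑ i ∈ U, ci i (M i) = c G₁ + c G₂ := by
      have hA : ∑ i ∈ G₁, ci i (M i) = ∑ i ∈ G₁, ci i G₁ :=
        Finset.sum_congr rfl (fun i hi => by rw [hMG1 i hi])
      have hB : ∑ i ∈ G₂, ci i (M i) = ∑ i ∈ G₂, ci i G₂ :=
        Finset.sum_congr rfl (fun i hi => by rw [hMG2 i hi])
      rw [hUdef, Finset.sum_union hdisj, hA, hB,
        budget_balance hproto (hfeas a) hG1ne, budget_balance hproto (hfeas b) hG2ne]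
    have hsum2 : ∑ i ∈ U, ci i U = c U := budget_balance hproto hU hUne
    have hlt : c U < c G₁ + c G₂ := by
      rw [← hsum1, ← hsum2]
      exact Finset.sum_lt_sum hweak ⟨i0, hi0, hstrict⟩
    set M'' : P → Finset P := fun j => if j ∈ U then U else M j with hM''set
    have hM''def : ∀ j, M'' j = if j ∈ U then U else M j := fun j => rfl
    have h1'' : ∀ j, j ∈ M'' j := by
      intro j
      by_cases h : j ∈ U
      · rw [hM''def, if_pos h]; exact h
      · rw [hM''def, if_neg h]; exact hmem j
    have h3'' : ∀ i j, j ∈ M'' i → M'' j = M'' i := by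
      intro i j hj
      by_cases h : i ∈ U
      · rw [hM''def, if_pos h] at hj
        rw [hM''def j, if_pos hj, hM''def i, if_pos h]
      · rw [hM''def, if_neg h] at hj
        have hjU : j ∉ U := by
          intro hjU
          rcases Finset.mem_union.mp hjU with hj1 | hj1
          · have h2 : M i = G₁ := (hcoord i j hj).symm.trans (hMG1 j hj1)
            exact h (Finset.mem_union_left _ (h2 ▸ hmem i))
          · have h2 : M i = G₂ := (hcoord i j hj).symm.trans (hMG2 j hj1)
            exact h (Finset.mem_union_right _ (h2 ▸ hmem i))
        rw [hM''def j, if_neg hjU, hM''def i, if_neg h]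
        exact hcoord i j hj
    have hmatch'' : IsMatching 𝒢 M'' := by
      refine ⟨fun j => ?_, h1'', h3''⟩
      by_cases h : j ∈ U
      · rw [hM''def, if_pos h]; exact hU
      · rw [hM''def, if_neg h]; exact hfeas j
    have key := hopt M'' hmatch''
    rw [matchCost_eq_sum c hmem hcoord, matchCost_eq_sum c h1'' h3''] at key
    have hsplit1 : ∑ i, c (M i) / ((M i).card : ℝ)
        = ∑ i ∈ U, c (M i) / ((M i).card : ℝ) + ∑ i ∈ Uᶜ, c (M i) / ((M i).card : ℝ) :=
      (Finset.sum_add_sum_compl U _).symm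
    have hsplit2 : ∑ i, c (M'' i) / ((M'' i).card : ℝ)
        = ∑ i ∈ U, c (M'' i) / ((M'' i).card : ℝ) + ∑ i ∈ Uᶜ, c (M'' i) / ((M'' i).card : ℝ) :=
      (Finset.sum_add_sum_compl U _).symm
    have hR : ∑ i ∈ Uᶜ, c (M'' i) / ((M'' i).card : ℝ)
        = ∑ i ∈ Uᶜ, c (M i) / ((M i).card : ℝ) := by
      refine Finset.sum_congr rfl fun i hi => ?_
      rw [hM''def, if_neg (Finset.mem_compl.mp hi)]
    have hL : ∑ i ∈ U, c (M i) / ((M i).card : ℝ) = c G₁ + c G₂ := by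
      have hA : ∑ i ∈ G₁, c (M i) / ((M i).card : ℝ) = ∑ _i ∈ G₁, c G₁ / ((G₁.card : ℝ)) :=
        Finset.sum_congr rfl (fun i hi => by rw [hMG1 i hi])
      have hB : ∑ i ∈ G₂, c (M i) / ((M i).card : ℝ) = ∑ _i ∈ G₂, c G₂ / ((G₂.card : ℝ)) :=
        Finset.sum_congr rfl (fun i hi => by rw [hMG2 i hi])
      rw [hUdef, Finset.sum_union hdisj, hA, hB,
        sum_div_card hG1ne (c G₁), sum_div_card hG2ne (c G₂)]
    have hL'' : ∑ i ∈ U, c (M'' i) / ((M'' i).card : ℝ) = c U := by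
      rw [Finset.sum_congr rfl (fun i hi => by rw [hM''def, if_pos hi])]
      exact sum_div_card hUne (c U)
    rw [hsplit1, hsplit2, hR, hL, hL''] at key
    linarith
end

section
/- Given a stable matching of the stable-roommate instance constructed from an instance of CTG-2 (where P is duplicated by a copy set P′, each x ∈ P ranks x′ immediately after her real acceptable partners, and each x′ ranks x first), no pair of the stable matching consists of x ∈ P matched to y′ ∈ P′ with y ≠ x. -/
/-- In the stable-roommate instance constructed from a CTG-2 instance by duplicating the
player set `P` into `P ⊕ P` (each original player `x` ranks her copy `x′` immediately
after her real acceptable partners, and each copy `x′` ranks `x` first), no pair of a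
stable matching consists of an original player `x` matched to a copy `y′` with `y ≠ x`.

Here `pref v a b` means that player `v` strictly prefers `a` to `b`;
`μ` is a stable matching: a fixed-point-free involution with no blocking pair. -/
theorem no_cross_pair_in_stable_matching {P : Type*}
    (pref : (P ⊕ P) → (P ⊕ P) → (P ⊕ P) → Prop)
    -- each copy `x′` ranks its original `x` first
    (hcopy_top : ∀ x : P, ∀ w : P ⊕ P, w ≠ Sum.inl x → pref (Sum.inr x) (Sum.inl x) w)
    -- each original `x` prefers her own copy `x′` to any other copy `y′`
    (horig : ∀ x y : P, y ≠ x → pref (Sum.inl x) (Sum.inr x) (Sum.inr y))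
    (μ : (P ⊕ P) → (P ⊕ P))
    (hinv : ∀ v, μ (μ v) = v)
    (hnofix : ∀ v, μ v ≠ v)
    (hstable : ∀ a b : P ⊕ P, a ≠ b → pref a b (μ a) → pref b a (μ b) → False) :
    ∀ x y : P, μ (Sum.inl x) = Sum.inr y → y = x := by
  intro x y hxy
  by_contra hne
  apply hstable (Sum.inl x) (Sum.inr x) (by simp)
  · rw [hxy]; exact horig x y hne
  · apply hcopy_top x
    intro h
    have : μ (Sum.inl x) = Sum.inr x := by rw [← h, hinv]
    rw [hxy] at this
    exact hne (Sum.inr.inj this)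
end

section
/- An instance of CTG-2 (all groups of size at most 2) admits a Traditional Strong Equilibrium if and only if the associated stable-roommate instance on P ∪ P′ (constructed by duplicating each player) admits a stable matching. In particular, from a TSE given by pairs (a₁,b₁),…,(a_k,b_k) and singletons c₁,…,c_ℓ, a stable matching is obtained by matching each a_i with b_i, each c_i with its copy c_i′, and matching the remaining even set of copies along a circle; conversely, a stable matching yields a TSE by pairing exactly those x, z ∈ P matched together and letting each x matched with its copy x′ travel alone. -/
open Finset

variable {n : ℕ}

/-- Preference key of original player `x ∈ P` over the duplicated player set `P ⊕ P′`
(smaller key = more preferred): real partners `y` and her own copy `x′` (travelling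
alone) come first, ordered by the CTG-2 costs `c x {x,y}` resp. `c x {x}`; then the other
copies (in circular order, which is irrelevant); her own entry comes last. -/
noncomputable def keyL (c : Fin n → Finset (Fin n) → ℝ) (x : Fin n) :
    (Fin n ⊕ Fin n) → ℕ ×ₗ ℝ
  | Sum.inl y => if y = x then toLex (2, 0) else toLex (0, c x ({x, y} : Finset (Fin n)))
  | Sum.inr y => if y = x then toLex (0, c x ({x} : Finset (Fin n)))
      else toLex (1, (((y - x : Fin n) : ℕ) : ℝ))

/-- Preference key of a copy `x′ ∈ P′`: the original `x` comes first, then the other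
copies in circular order `y′ ≺ z′ ↔ (y − x) mod n < (z − x) mod n`, then the remaining
originals (order irrelevant). -/
noncomputable def keyR (x : Fin n) : (Fin n ⊕ Fin n) → ℕ ×ₗ ℝ
  | Sum.inl y => if y = x then toLex (0, 0) else toLex (2, ((y : ℕ) : ℝ))
  | Sum.inr y => toLex (1, (((y - x : Fin n) : ℕ) : ℝ))

/-- Strict preference relation of the constructed stable-roommate instance. -/
noncomputable def key (c : Fin n → Finset (Fin n) → ℝ) :
    (Fin n ⊕ Fin n) → (Fin n ⊕ Fin n) → ℕ ×ₗ ℝ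
  | Sum.inl x => keyL c x
  | Sum.inr x => keyR x

/-- `pref c v a b`: player `v` strictly prefers `a` to `b`. -/
noncomputable def pref (c : Fin n → Finset (Fin n) → ℝ)
    (v a b : Fin n ⊕ Fin n) : Prop :=
  key c v a < key c v b

/-- A matching of the CTG-2 instance: coordinated groups of size at most 2. -/
def IsMatching2 (M : Fin n → Finset (Fin n)) : Prop :=
  (∀ i, i ∈ M i) ∧ (∀ i, (M i).card ≤ 2) ∧ ∀ i j, j ∈ M i → M j = M i

/-- Traditional Strong Equilibrium of the CTG-2 instance: for every feasible group `G`
(of size at most 2), either all members of `G` are matched together as `G`, or some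
member weakly prefers her current group. -/
def IsTSE2 (c : Fin n → Finset (Fin n) → ℝ) (M : Fin n → Finset (Fin n)) : Prop :=
  ∀ G : Finset (Fin n), G.Nonempty → G.card ≤ 2 →
    (∀ i ∈ G, M i = G) ∨ ∃ i ∈ G, c i (M i) ≤ c i G

/-- A stable matching of the constructed roommate instance: a fixed-point-free involution
of `P ⊕ P′` with no blocking pair. -/
def IsStableMatching (c : Fin n → Finset (Fin n) → ℝ)
    (μ : (Fin n ⊕ Fin n) → (Fin n ⊕ Fin n)) : Prop :=
  (∀ v, μ (μ v) = v) ∧ (∀ v, μ v ≠ v) ∧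
    ∀ a b, a ≠ b → μ a ≠ b → ¬ (pref c a b (μ a) ∧ pref c b a (μ b))

open Function

/-! A CTG-2 matching is an involution `p` of `P` (`M x = {x, p x}`, singletons being the fixed
points), and for it the TSE conditions say that nobody prefers travelling alone and that no two
players both prefer each other to their partners. These are exactly the blocking conditions of the
roommate instance among the originals when `x` is matched to `p x`, or to her own copy `x′` if
`p x = x`. The remaining copies, an even number, are paired antipodally along the circle, the
`i`-th with the `(i + m)`-th: two of them could only block if each lay less than half a turn
ahead of the other. Conversely, in a stable matching no original is matched to the copy of another
player, since she and her own copy, whose first choice she is, would block. -/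

theorem Fin.val_sub_lt_val_sub_iff {N : ℕ} {x a b : Fin N} (ha : a ≠ x) (hb : b ≠ x) :
    ((a - x : Fin N) : ℕ) < (b - x : Fin N) ↔ x < a ∧ (a < b ∨ b < x) ∨ a < b ∧ b < x := by
  have := x.isLt
  rcases lt_or_gt_of_ne ha with h | h <;> rcases lt_or_gt_of_ne hb with h' | h' <;>
    simp only [Fin.coe_sub_iff_lt.mpr h, Fin.coe_sub_iff_le.mpr h.le, Fin.coe_sub_iff_lt.mpr h',
      Fin.coe_sub_iff_le.mpr h'.le, Fin.lt_def] at * <;> omega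

theorem Fin.val_sub_add_val_sub {N : ℕ} {x y : Fin N} (h : x ≠ y) :
    ((y - x : Fin N) : ℕ) + (x - y : Fin N) = N := by
  have := x.isLt
  rcases lt_or_gt_of_ne h with h | h <;>
    simp only [Fin.coe_sub_iff_lt.mpr h, Fin.coe_sub_iff_le.mpr h.le, Fin.lt_def] at * <;> omega

theorem StrictMono.val_sub_lt_val_sub_iff {K N : ℕ} {g : Fin K → Fin N} (hg : StrictMono g)
    {p q r : Fin K} (hq : q ≠ p) (hr : r ≠ p) :
    ((g q - g p : Fin N) : ℕ) < (g r - g p : Fin N) ↔ ((q - p : Fin K) : ℕ) < (r - p : Fin K) := by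
  rw [Fin.val_sub_lt_val_sub_iff (hg.injective.ne hq) (hg.injective.ne hr),
    Fin.val_sub_lt_val_sub_iff hq hr]
  simp only [hg.lt_iff_lt]

theorem Finset.exists_circular_stable_matching {N : ℕ} (S : Finset (Fin N)) (hS : 2 ∣ #S) :
    ∃ f : Fin N → Fin N, (∀ x ∈ S, f x ∈ S ∧ f x ≠ x ∧ f (f x) = x) ∧
      ∀ x ∈ S, ∀ y ∈ S, x ≠ y → ¬ (((y - x : Fin N) : ℕ) < (f x - x : Fin N) ∧
        ((x - y : Fin N) : ℕ) < (f y - y : Fin N)) := by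
  obtain ⟨m, hm⟩ := hS
  rcases S.eq_empty_or_nonempty with rfl | hne
  · exact ⟨id, by simp, by simp⟩
  have hm_pos : 0 < m := by have := hne.card_pos; omega
  have : NeZero (2 * m) := ⟨by omega⟩
  set e := S.orderIsoOfFin hm
  set g : Fin (2 * m) → Fin N := fun i => e i
  have hg : StrictMono g := fun i j h => by simpa [g] using h
  have hgS : ∀ x (hx : x ∈ S), g (e.symm ⟨x, hx⟩) = x := fun x hx => by simp [g]
  set k : Fin (2 * m) := ⟨m, by omega⟩
  let f : Fin N → Fin N := fun x => if hx : x ∈ S then g (e.symm ⟨x, hx⟩ + k) else x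
  have hfg : ∀ i, f (g i) = g (i + k) := fun i => by simp [f, g]
  have hkk : k + k = 0 := Fin.ext <| by simp [Fin.val_add, k, ← two_mul]
  have hshift : ∀ i, i + k ≠ i := fun i h => by
    have := congrArg Fin.val (add_eq_left.mp h); simp [k] at this; omega
  refine ⟨f, fun x hx => ?_, fun x hx y hy hxy => ?_⟩
  · rw [← hgS x hx, hfg, hfg, add_assoc, hkk, add_zero]
    exact ⟨(e _).2, hg.injective.ne (hshift _), rfl⟩
  · rw [← hgS x hx, ← hgS y hy, hfg, hfg]
    set i := e.symm ⟨x, hx⟩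
    set j := e.symm ⟨y, hy⟩
    have hij : i ≠ j := fun h => hxy (by rw [← hgS x hx, ← hgS y hy]; exact congrArg g h)
    rw [hg.val_sub_lt_val_sub_iff hij.symm (hshift i), hg.val_sub_lt_val_sub_iff hij (hshift j),
      add_sub_cancel_left, add_sub_cancel_left]
    have := Fin.val_sub_add_val_sub hij
    simp only [k]
    omega

theorem Finset.exists_eq_pair_of_mem_of_card_le_two {α : Type*} [DecidableEq α] {s : Finset α}
    {a : α} (ha : a ∈ s) (hs : #s ≤ 2) : ∃ b, s = {a, b} := by
  have hle : #(s.erase a) ≤ 1 := by rw [card_erase_of_mem ha]; omega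
  rcases (s.erase a).eq_empty_or_nonempty with he | ⟨b, hb⟩
  · exact ⟨a, by rw [← insert_erase ha, he]; simp⟩
  · refine ⟨b, ?_⟩
    rw [← insert_erase ha, eq_singleton_iff_unique_mem.mpr
      ⟨hb, fun y hy => card_le_one.mp hle y hy b hb⟩]

theorem isMatching2_iff {M : Fin n → Finset (Fin n)} :
    IsMatching2 M ↔ ∃ p : Fin n → Fin n, Involutive p ∧ ∀ x, M x = {x, p x} := by
  constructor
  · rintro ⟨hmem, hcard, hcoh⟩
    choose p hp using fun x => exists_eq_pair_of_mem_of_card_le_two (hmem x) (hcard x)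
    refine ⟨p, fun x => ?_, hp⟩
    have hx : x ∈ M (p x) := hcoh x (p x) (by simp [hp x]) ▸ hmem x
    rw [hp (p x), mem_insert, mem_singleton] at hx
    rcases hx with h | h
    · rw [← h, ← h]
    · exact h.symm
  · rintro ⟨p, hp, hM⟩
    refine ⟨fun x => by simp [hM], fun x => hM x ▸ card_le_two, fun x y hy => ?_⟩
    rw [hM, mem_insert, mem_singleton] at hy
    rcases hy with rfl | rfl
    · rfl
    · rw [hM, hM, hp, pair_comm]

theorem isTSE2_iff_of_involutive {c : Fin n → Finset (Fin n) → ℝ} {p : Fin n → Fin n}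
    (hp : Involutive p) :
    IsTSE2 c (fun x => {x, p x}) ↔ (∀ x, c x {x, p x} ≤ c x {x}) ∧
      ∀ x y, x ≠ y → p x ≠ y → c x {x, p x} ≤ c x {x, y} ∨ c y {y, p y} ≤ c y {y, x} := by
  simp only [IsTSE2]
  constructor
  · intro htse
    refine ⟨fun x => ?_, fun x y hxy hpxy => ?_⟩
    · rcases htse {x} (singleton_nonempty x) (by simp) with h | ⟨i, hi, h⟩
      · rw [h x (mem_singleton_self x)]
      · rwa [mem_singleton.mp hi] at h
    · rcases htse {x, y} (insert_nonempty x {y}) card_le_two with h | ⟨i, hi, h⟩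
      · have hy : y ∈ ({x, p x} : Finset (Fin n)) := by simp [h x (mem_insert_self x {y})]
        simp [hxy.symm, Ne.symm hpxy] at hy
      · rcases mem_insert.mp hi with rfl | hi
        · exact Or.inl h
        · obtain rfl := mem_singleton.mp hi
          rw [pair_comm x] at h
          exact Or.inr h
  · rintro ⟨hsolo, hpair⟩ G hG hGcard
    obtain ⟨a, ha⟩ := hG
    obtain ⟨b, rfl⟩ := exists_eq_pair_of_mem_of_card_le_two ha hGcard
    by_cases hab : a = b
    · subst hab
      exact Or.inr ⟨a, ha, by simpa using hsolo a⟩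
    by_cases hpab : p a = b
    · left
      intro i hi
      rcases mem_insert.mp hi with rfl | hi
      · rw [hpab]
      · rw [mem_singleton.mp hi, ← hpab, hp, pair_comm]
    · rcases hpair a b hab hpab with h | h
      · exact Or.inr ⟨a, mem_insert_self a {b}, h⟩
      · exact Or.inr ⟨b, by simp, by rwa [pair_comm a b]⟩

section Roommates

variable (c : Fin n → Finset (Fin n) → ℝ) {x y : Fin n}

theorem key_inl_inl (h : y ≠ x) : key c (.inl x) (.inl y) = toLex (0, c x {x, y}) := by
  simp [key, keyL, h]

theorem key_inl_inr_self : key c (.inl x) (.inr x) = toLex (0, c x {x}) := by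
  simp [key, keyL]

theorem key_inl_inr (h : y ≠ x) :
    key c (.inl x) (.inr y) = toLex (1, (((y - x : Fin n) : ℕ) : ℝ)) := by
  simp [key, keyL, h]

theorem key_inr_inl_self : key c (.inr x) (.inl x) = toLex (0, 0) := by
  simp [key, keyR]

theorem key_inr_inl (h : y ≠ x) : key c (.inr x) (.inl y) = toLex (2, ((y : ℕ) : ℝ)) := by
  simp [key, keyR, h]

theorem key_inr_inr : key c (.inr x) (.inr y) = toLex (1, (((y - x : Fin n) : ℕ) : ℝ)) := by
  simp [key, keyR]

theorem pref_inr_inl_self {v : Fin n ⊕ Fin n} (hv : v ≠ .inl x) : pref c (.inr x) (.inl x) v := by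
  rcases v with z | z
  · rw [pref, key_inr_inl_self, key_inr_inl c (by rintro rfl; exact hv rfl)]
    exact Prod.Lex.toLex_lt_toLex.mpr (Or.inl two_pos)
  · rw [pref, key_inr_inl_self, key_inr_inr]
    exact Prod.Lex.toLex_lt_toLex.mpr (Or.inl one_pos)

theorem not_pref_inr_inl_self (v : Fin n ⊕ Fin n) : ¬ pref c (.inr x) v (.inl x) := by
  by_cases hv : v = .inl x
  · rw [hv]; exact lt_irrefl _
  · exact lt_asymm (pref_inr_inl_self c hv)

theorem pref_inr_inr_inr {z : Fin n} :
    pref c (.inr x) (.inr y) (.inr z) ↔ ((y - x : Fin n) : ℕ) < ((z - x : Fin n) : ℕ) := by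
  rw [pref, key_inr_inr, key_inr_inr, Prod.Lex.toLex_lt_toLex]
  simp only [lt_irrefl, false_or, true_and, Nat.cast_lt]

theorem pref_inl_inr_self_inr (h : y ≠ x) : pref c (.inl x) (.inr x) (.inr y) := by
  rw [pref, key_inl_inr_self, key_inl_inr c h]
  exact Prod.Lex.toLex_lt_toLex.mpr (Or.inl one_pos)

variable {c} {p : Fin n → Fin n}

variable (p) in
def partner (x : Fin n) : Fin n ⊕ Fin n :=
  if p x = x then .inr x else .inl (p x)

theorem partner_of_eq (h : p x = x) : partner p x = .inr x := if_pos h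

theorem partner_of_ne (h : p x ≠ x) : partner p x = .inl (p x) := if_neg h

theorem eq_of_partner_eq_inl (h : partner p x = .inl y) : p x = y := by
  unfold partner at h
  split_ifs at h
  exact Sum.inl_injective h

variable (c p x) in
theorem key_inl_partner : key c (.inl x) (partner p x) = toLex (0, c x {x, p x}) := by
  by_cases h : p x = x
  · rw [partner_of_eq h, key_inl_inr_self, h, pair_eq_singleton]
  · rw [partner_of_ne h, key_inl_inl c h]

theorem pref_inl_inl_partner (h : y ≠ x) :
    pref c (.inl x) (.inl y) (partner p x) ↔ c x {x, y} < c x {x, p x} := by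
  rw [pref, key_inl_inl c h, key_inl_partner, Prod.Lex.toLex_lt_toLex]
  simp

theorem not_pref_inl_inr_partner (hsolo : c x {x, p x} ≤ c x {x}) (y : Fin n) :
    ¬ pref c (.inl x) (.inr y) (partner p x) := by
  by_cases h : y = x
  · rw [h, pref, key_inl_inr_self, key_inl_partner, Prod.Lex.toLex_lt_toLex]
    simpa using hsolo
  · rw [pref, key_inl_inr c h, key_inl_partner, Prod.Lex.toLex_lt_toLex]
    simp

namespace IsStableMatching

variable {μ : Fin n ⊕ Fin n → Fin n ⊕ Fin n}

theorem involutive (hμ : IsStableMatching c μ) : Involutive μ := hμ.1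

theorem inl_ne_inr_of_ne (hμ : IsStableMatching c μ) (h : y ≠ x) : μ (.inl x) ≠ .inr y := by
  intro hxy
  refine hμ.2.2 (.inl x) (.inr x) Sum.inl_ne_inr (by simpa [hxy] using h) ⟨?_, ?_⟩
  · rw [hxy]
    exact pref_inl_inr_self_inr c h
  · refine pref_inr_inl_self c fun hx => h ?_
    rw [hμ.involutive.eq_iff, hxy] at hx
    exact Sum.inr_injective hx.symm

theorem exists_involutive_partner (hμ : IsStableMatching c μ) :
    ∃ p : Fin n → Fin n, Involutive p ∧ ∀ x, μ (.inl x) = partner p x := by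
  let p x := Sum.elim id (fun _ => x) (μ (.inl x))
  have hp : ∀ x, μ (.inl x) = partner p x := fun x => by
    rcases h : μ (.inl x) with z | w
    · have hzx : z ≠ x := by rintro rfl; exact hμ.2.1 _ h
      simp [partner, p, h, hzx]
    · obtain rfl : w = x := by_contra fun hw => hμ.inl_ne_inr_of_ne hw h
      simp [partner, p, h]
  refine ⟨p, fun x => ?_, hp⟩
  by_cases hx : p x = x
  · rw [hx, hx]
  · refine eq_of_partner_eq_inl (x := p x) ?_
    rw [← hp, hμ.involutive.eq_iff, hp, partner_of_ne hx]

theorem isTSE2 (hμ : IsStableMatching c μ) (hp : Involutive p)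
    (hμp : ∀ x, μ (.inl x) = partner p x) : IsTSE2 c (fun x => {x, p x}) := by
  rw [isTSE2_iff_of_involutive hp]
  refine ⟨fun x => ?_, fun x y hxy hpxy => ?_⟩
  · by_cases hx : p x = x
    · rw [hx, pair_eq_singleton]
    have hne : μ (.inl x) ≠ .inr x := by simp [hμp, partner_of_ne hx]
    refine not_lt.mp fun hlt => hμ.2.2 (.inl x) (.inr x) Sum.inl_ne_inr hne ⟨?_, ?_⟩
    · rw [hμp, pref, key_inl_inr_self, key_inl_partner, Prod.Lex.toLex_lt_toLex]
      simpa using hlt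
    · exact pref_inr_inl_self c fun h => hne (hμ.involutive.eq_iff.mp h).symm
  · have hne : μ (.inl x) ≠ .inl y := fun h => hpxy (eq_of_partner_eq_inl (hμp x ▸ h))
    have := hμ.2.2 (.inl x) (.inl y) (by simpa using hxy) hne
    rwa [hμp, hμp, pref_inl_inl_partner (Ne.symm hxy), pref_inl_inl_partner hxy, not_and_or,
      not_lt, not_lt] at this

end IsStableMatching

variable (p) in
def roommateMatching (f : Fin n → Fin n) : Fin n ⊕ Fin n → Fin n ⊕ Fin n
  | .inl x => partner p x
  | .inr x => if p x = x then .inl x else .inr (f x)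

variable {f : Fin n → Fin n}

theorem roommateMatching_inr_of_ne (h : p x ≠ x) : roommateMatching p f (.inr x) = .inr (f x) :=
  if_neg h

theorem isStableMatching_roommateMatching (hp : Involutive p)
    (hf : ∀ x, p x ≠ x → p (f x) ≠ f x ∧ f x ≠ x ∧ f (f x) = x)
    (hcirc : ∀ x, p x ≠ x → ∀ y, p y ≠ y → x ≠ y →
      ¬ (((y - x : Fin n) : ℕ) < (f x - x : Fin n) ∧ ((x - y : Fin n) : ℕ) < (f y - y : Fin n)))
    (hsolo : ∀ x, c x {x, p x} ≤ c x {x})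
    (hpair : ∀ x y, x ≠ y → p x ≠ y → c x {x, p x} ≤ c x {x, y} ∨ c y {y, p y} ≤ c y {y, x}) :
    IsStableMatching c (roommateMatching p f) := by
  refine ⟨?_, ?_, ?_⟩
  · rintro (x | x) <;> by_cases hx : p x = x
    · simp [roommateMatching, partner_of_eq hx, hx]
    · simp [roommateMatching, partner_of_ne hx, partner_of_ne (hp.injective.ne hx), hp x]
    · simp [roommateMatching, partner_of_eq hx, hx]
    · simp [roommateMatching, hx, (hf x hx).1, (hf x hx).2.2]
  · rintro (x | x) <;> by_cases hx : p x = x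
    · simp [roommateMatching, partner_of_eq hx]
    · simp [roommateMatching, partner_of_ne hx, hx]
    · simp [roommateMatching, hx]
    · simp [roommateMatching, hx, (hf x hx).2.1]
  · rintro (x | x) (y | y) hxy hμxy ⟨hx, hy⟩
    · have hyx : y ≠ x := by rintro rfl; exact hxy rfl
      have hpxy : p x ≠ y := fun h =>
        hμxy (by rw [roommateMatching, partner_of_ne (by rwa [h]), h])
      rw [roommateMatching, pref_inl_inl_partner hyx] at hx
      rw [roommateMatching, pref_inl_inl_partner hyx.symm] at hy
      rcases hpair x y hyx.symm hpxy with h | h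
      · exact (not_lt.mpr h) hx
      · exact (not_lt.mpr h) hy
    · exact not_pref_inl_inr_partner (hsolo x) y hx
    · exact not_pref_inl_inr_partner (hsolo y) x hy
    · by_cases hpx : p x = x
      · rw [roommateMatching, if_pos hpx] at hx
        exact not_pref_inr_inl_self c _ hx
      by_cases hpy : p y = y
      · rw [roommateMatching, if_pos hpy] at hy
        exact not_pref_inr_inl_self c _ hy
      rw [roommateMatching_inr_of_ne hpx, pref_inr_inr_inr] at hx
      rw [roommateMatching_inr_of_ne hpy, pref_inr_inr_inr] at hy
      exact hcirc x hpx y hpy (by rintro rfl; exact hxy rfl) ⟨hx, hy⟩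

theorem CTG2_TSE_iff_stable_roommates_general
    (c : Fin n → Finset (Fin n) → ℝ) :
    (∃ M : Fin n → Finset (Fin n), IsMatching2 M ∧ IsTSE2 c M) ↔
      ∃ μ : (Fin n ⊕ Fin n) → (Fin n ⊕ Fin n), IsStableMatching c μ := by
  constructor
  · rintro ⟨M, hM, htse⟩
    obtain ⟨p, hp, hMp⟩ := isMatching2_iff.mp hM
    obtain rfl : M = fun x => {x, p x} := funext hMp
    obtain ⟨hsolo, hpair⟩ := (isTSE2_iff_of_involutive hp).mp htse
    have hp2 : hp.toPerm p ^ 2 = 1 := Equiv.ext hp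
    obtain ⟨f, hf, hcirc⟩ :=
      exists_circular_stable_matching _ (Equiv.Perm.two_dvd_card_support hp2)
    simp only [Equiv.Perm.mem_support, Involutive.coe_toPerm] at hf hcirc
    exact ⟨_, isStableMatching_roommateMatching hp hf hcirc hsolo hpair⟩
  · rintro ⟨μ, hμ⟩
    obtain ⟨p, hp, hμp⟩ := hμ.exists_involutive_partner
    exact ⟨_, isMatching2_iff.mpr ⟨p, hp, fun _ => rfl⟩, hμ.isTSE2 hp hμp⟩

/-- An instance of CTG-2 (all groups of size at most 2, strict preferences) admits a
Traditional Strong Equilibrium if and only if the associated stable-roommate instance on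
the duplicated player set `P ⊕ P′` admits a stable matching. -/
theorem CTG2_TSE_iff_stable_roommates
    (c : Fin n → Finset (Fin n) → ℝ)
    -- strict preferences: no ties among the relevant options of any player
    (hstrict₁ : ∀ x y z : Fin n, y ≠ z → y ≠ x → z ≠ x →
      c x ({x, y} : Finset (Fin n)) ≠ c x ({x, z} : Finset (Fin n)))
    (hstrict₂ : ∀ x y : Fin n, y ≠ x →
      c x ({x, y} : Finset (Fin n)) ≠ c x ({x} : Finset (Fin n))) :
    (∃ M : Fin n → Finset (Fin n), IsMatching2 M ∧ IsTSE2 c M) ↔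
      ∃ μ : (Fin n ⊕ Fin n) → (Fin n ⊕ Fin n), IsStableMatching c μ :=
  CTG2_TSE_iff_stable_roommates_general c
end Roommates
end

section
/- There exists a five-player instance of the Co-Travellers Game in which no matching is simultaneously a Ridepooling Hermetic Equilibrium and a Ridepooling Unmergeable Equilibrium: with players A,B,C,D,E, feasible groups of sizes 1, 2, and 3 as specified, and symmetric circular preferences where player p_i ranks (in order) p_{i+1}p_{i+2}, p_{i+1}, p_{i-1}p_{i+1}, p_{i-1}, p_{i-2}p_{i-1}, and travelling alone (indices mod 5), every matching either contains a non-hermetic group or a pair of mergeable groups. -/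
open Finset

/-- Feasible groups of the five-player instance: the singletons, the adjacent pairs
`{pᵢ, pᵢ₊₁}` and the consecutive triples `{pᵢ, pᵢ₊₁, pᵢ₊₂}` (indices mod 5). -/
def G5 : Set (Finset (Fin 5)) :=
  {G | (∃ i : Fin 5, G = {i}) ∨ (∃ i : Fin 5, G = {i, i + 1}) ∨
    ∃ i : Fin 5, G = {i, i + 1, i + 2}}

/-- A matching: each player's group is feasible, contains her, and groups are coordinated. -/
def IsMatching5 (M : Fin 5 → Finset (Fin 5)) : Prop :=
  (∀ i, M i ∈ G5) ∧ (∀ i, i ∈ M i) ∧ ∀ i j, j ∈ M i → M j = M i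

/-- A group `G` is hermetic if no feasible proper nonempty subset `H ⊊ G` wants to leave. -/
def Hermetic5 (c : Fin 5 → Finset (Fin 5) → ℝ) (G : Finset (Fin 5)) : Prop :=
  ∀ H ∈ G5, H ⊂ G → H.Nonempty → ∃ i ∈ H, c i G ≤ c i H

/-- Two disjoint groups of the matching `M` are mergeable: their union is feasible, every
member weakly improves and some member strictly improves. -/
def Mergeable5 (c : Fin 5 → Finset (Fin 5) → ℝ) (M : Fin 5 → Finset (Fin 5))
    (G₁ G₂ : Finset (Fin 5)) : Prop :=
  Disjoint G₁ G₂ ∧ G₁ ∪ G₂ ∈ G5 ∧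
    (∀ i ∈ G₁ ∪ G₂, c i (G₁ ∪ G₂) ≤ c i (M i)) ∧
    ∃ i ∈ G₁ ∪ G₂, c i (G₁ ∪ G₂) < c i (M i)

/-- Ridepooling Hermetic Equilibrium: every group of the matching is hermetic. -/
def IsRHE5 (c : Fin 5 → Finset (Fin 5) → ℝ) (M : Fin 5 → Finset (Fin 5)) : Prop :=
  ∀ i, Hermetic5 c (M i)

/-- Ridepooling Unmergeable Equilibrium: a TNE with no pair of mergeable groups. -/
def IsRUE5 (c : Fin 5 → Finset (Fin 5) → ℝ) (M : Fin 5 → Finset (Fin 5)) : Prop :=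
  (∀ i, c i (M i) ≤ c i ({i} : Finset (Fin 5))) ∧
    ∀ G₁ G₂ : Finset (Fin 5), (∃ i, M i = G₁) → (∃ j, M j = G₂) → G₁ ≠ G₂ →
      ¬ Mergeable5 c M G₁ G₂

/-- Numerical ranks for the circular preferences. -/
def cN : Fin 5 → Finset (Fin 5) → ℕ := fun i G =>
  if G = {i, i + 1, i + 2} then 0
  else if G = {i, i + 1} then 1
  else if G = {i - 1, i, i + 1} then 2
  else if G = {i - 1, i} then 3
  else if G = {i - 2, i - 1, i} then 4
  else if G = {i} then 5
  else 6

lemma cN_chain : ∀ i : Fin 5,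
    cN i {i, i + 1, i + 2} < cN i {i, i + 1} ∧
    cN i {i, i + 1} < cN i {i - 1, i, i + 1} ∧
    cN i {i - 1, i, i + 1} < cN i {i - 1, i} ∧
    cN i {i - 1, i} < cN i {i - 2, i - 1, i} ∧
    cN i {i - 2, i - 1, i} < cN i {i} := by decide

lemma ssub_triple : ∀ j : Fin 5,
    ({j + 1, j + 2} : Finset (Fin 5)) ⊂ {j, j + 1, j + 2} := by decide

lemma noTriple : ∀ j k : Fin 5, k ∈ ({j + 1, j + 2} : Finset (Fin 5)) →
    ¬ cN k {j, j + 1, j + 2} ≤ cN k {j + 1, j + 2} := by decide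

lemma tripPair : ∀ j : Fin 5,
    ({j + 1, j + 2} : Finset (Fin 5)) = {j + 1, (j + 1) + 1} := by decide

lemma pair_eq : ∀ j : Fin 5,
    ({j, j + 1} : Finset (Fin 5)) = {(j + 1) - 1, j + 1} := by decide

lemma sing_ne_pair : ∀ i : Fin 5,
    ({i} : Finset (Fin 5)) ≠ {i - 1, (i - 1) + 1} := by decide

lemma mem_succ : ∀ i : Fin 5, i ∈ ({i - 1, (i - 1) + 1} : Finset (Fin 5)) := by decide

-- singleton-singleton merge facts
lemma ss_disj : ∀ i : Fin 5, Disjoint ({i - 1} : Finset (Fin 5)) {i} := by decide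
lemma ss_union : ∀ i : Fin 5,
    ({i - 1} : Finset (Fin 5)) ∪ {i} = {i - 1, (i - 1) + 1} := by decide
lemma ss_mem : ∀ i k : Fin 5, k ∈ ({i - 1} : Finset (Fin 5)) ∪ {i} →
    k = i - 1 ∨ k = i := by decide
lemma ss_costs : ∀ i : Fin 5,
    cN (i - 1) (({i - 1} : Finset (Fin 5)) ∪ {i}) < cN (i - 1) {i - 1} ∧
    cN i (({i - 1} : Finset (Fin 5)) ∪ {i}) < cN i {i} := by decide
lemma ss_ne : ∀ i : Fin 5, ({i - 1} : Finset (Fin 5)) ≠ {i} := by decide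
lemma ss_self_mem : ∀ i : Fin 5, i ∈ ({i - 1} : Finset (Fin 5)) ∪ {i} := by decide

-- pair-singleton merge facts
lemma ps_eq : ∀ i : Fin 5,
    ({(i - 1) - 1, i - 1} : Finset (Fin 5)) = {i - 2, i - 1} := by decide
lemma ps_disj : ∀ i : Fin 5, Disjoint ({i - 2, i - 1} : Finset (Fin 5)) {i} := by decide
lemma ps_union : ∀ i : Fin 5,
    ({i - 2, i - 1} : Finset (Fin 5)) ∪ {i} = {i - 2, (i - 2) + 1, (i - 2) + 2} := by decide
lemma ps_mem : ∀ i k : Fin 5, k ∈ ({i - 2, i - 1} : Finset (Fin 5)) ∪ {i} →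
    k = i - 2 ∨ k = i - 1 ∨ k = i := by decide
lemma ps_costs : ∀ i : Fin 5,
    cN (i - 2) (({i - 2, i - 1} : Finset (Fin 5)) ∪ {i}) < cN (i - 2) {i - 2, i - 1} ∧
    cN (i - 1) (({i - 2, i - 1} : Finset (Fin 5)) ∪ {i}) < cN (i - 1) {i - 2, i - 1} ∧
    cN i (({i - 2, i - 1} : Finset (Fin 5)) ∪ {i}) < cN i {i} := by decide
lemma ps_ne : ∀ i : Fin 5, ({i - 2, i - 1} : Finset (Fin 5)) ≠ {i} := by decide
lemma ps_self_mem : ∀ i : Fin 5, i ∈ ({i - 2, i - 1} : Finset (Fin 5)) ∪ {i} := by decide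
lemma ps_mem2 : ∀ i : Fin 5, i - 2 ∈ ({i - 2, i - 1} : Finset (Fin 5)) := by decide
lemma ps_mem1 : ∀ i : Fin 5, i - 1 ∈ ({i - 2, i - 1} : Finset (Fin 5)) := by decide

/-- There is a five-player instance of the Co-Travellers Game, with symmetric circular
preferences (player `pᵢ` ranks, in order: `{pᵢ,pᵢ₊₁,pᵢ₊₂}`, `{pᵢ,pᵢ₊₁}`,
`{pᵢ₋₁,pᵢ,pᵢ₊₁}`, `{pᵢ₋₁,pᵢ}`, `{pᵢ₋₂,pᵢ₋₁,pᵢ}`, travelling alone), in which no matching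
is simultaneously a Ridepooling Hermetic Equilibrium and a Ridepooling Unmergeable
Equilibrium. -/
theorem exists_instance_no_RHE_and_RUE :
    ∃ c : Fin 5 → Finset (Fin 5) → ℝ,
      (∀ i : Fin 5,
        c i ({i, i + 1, i + 2} : Finset (Fin 5)) < c i ({i, i + 1} : Finset (Fin 5)) ∧
        c i ({i, i + 1} : Finset (Fin 5)) < c i ({i - 1, i, i + 1} : Finset (Fin 5)) ∧
        c i ({i - 1, i, i + 1} : Finset (Fin 5)) < c i ({i - 1, i} : Finset (Fin 5)) ∧
        c i ({i - 1, i} : Finset (Fin 5)) < c i ({i - 2, i - 1, i} : Finset (Fin 5)) ∧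
        c i ({i - 2, i - 1, i} : Finset (Fin 5)) < c i ({i} : Finset (Fin 5))) ∧
      ∀ M : Fin 5 → Finset (Fin 5), IsMatching5 M → ¬ (IsRHE5 c M ∧ IsRUE5 c M) := by
  refine ⟨fun i G => ((cN i G : ℕ) : ℝ), ?_, ?_⟩
  · intro i
    obtain ⟨h1, h2, h3, h4, h5⟩ := cN_chain i
    exact ⟨Nat.cast_lt.mpr h1, Nat.cast_lt.mpr h2, Nat.cast_lt.mpr h3,
      Nat.cast_lt.mpr h4, Nat.cast_lt.mpr h5⟩
  · rintro M ⟨hG, hmem, hcoh⟩ ⟨hRHE, hRUE⟩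
    -- Step A: every group is a singleton or an adjacent pair
    have shape : ∀ i, M i = {i} ∨ M i = {i - 1, i} ∨ M i = {i, i + 1} := by
      intro i
      rcases hG i with ⟨j, hj⟩ | ⟨j, hj⟩ | ⟨j, hj⟩
      · have hi := hmem i
        rw [hj, Finset.mem_singleton] at hi
        subst hi; exact Or.inl hj
      · have hi := hmem i
        rw [hj, Finset.mem_insert, Finset.mem_singleton] at hi
        rcases hi with rfl | rfl
        · exact Or.inr (Or.inr hj)
        · refine Or.inr (Or.inl ?_)
          rw [hj, pair_eq]
      · exfalso
        have h := hRHE i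
        rw [hj] at h
        obtain ⟨k, hk, hle⟩ := h {j + 1, j + 2} (Or.inr (Or.inl ⟨j + 1, tripPair j⟩))
          (ssub_triple j) (Finset.insert_nonempty _ _)
        exact noTriple j k hk (Nat.cast_le.mp hle)
    -- Step B: there is a singleton group
    have hsing : ∃ i, M i = {i} := by
      by_contra h
      push_neg at h
      have hp : ∀ i, M i = {i - 1, i} ∨ M i = {i, i + 1} :=
        fun i => (shape i).resolve_left (h i)
      have key : ∀ i : Fin 5, M i = {i, i + 1} → M (i + 1) = M i := by
        intro i hi'
        exact hcoh i (i + 1) (by rw [hi']; exact Finset.mem_insert_of_mem (Finset.mem_singleton_self _))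
      have key' : ∀ i : Fin 5, M i = {i - 1, i} → M (i - 1) = M i := by
        intro i hi'
        exact hcoh i (i - 1) (by rw [hi']; exact Finset.mem_insert_self _ _)
      rcases hp 0 with h0 | h0
      · have e4 : M (0 - 1) = M 0 := key' 0 h0
        rw [show (0 : Fin 5) - 1 = 4 by decide] at e4
        rcases hp 1 with h1 | h1
        · have e : M (1 - 1) = M 1 := key' 1 h1
          rw [show (1 : Fin 5) - 1 = 0 by decide] at e
          exact absurd ((h0.symm.trans e).trans h1) (by decide)
        · have e2 : M (1 + 1) = M 1 := key 1 h1
          rw [show (1 : Fin 5) + 1 = 2 by decide] at e2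
          rcases hp 3 with h3 | h3
          · have e : M (3 - 1) = M 3 := key' 3 h3
            rw [show (3 : Fin 5) - 1 = 2 by decide] at e
            have : M 3 = {1, 1 + 1} := (e.symm.trans e2).trans h1
            exact absurd (h3.symm.trans this) (by decide)
          · have e : M (3 + 1) = M 3 := key 3 h3
            rw [show (3 : Fin 5) + 1 = 4 by decide] at e
            have : M 3 = {0 - 1, 0} := (e.symm.trans e4).trans h0
            exact absurd (h3.symm.trans this) (by decide)
      · have e1 : M (0 + 1) = M 0 := key 0 h0
        rw [show (0 : Fin 5) + 1 = 1 by decide] at e1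
        rcases hp 2 with h2 | h2
        · have e : M (2 - 1) = M 2 := key' 2 h2
          rw [show (2 : Fin 5) - 1 = 1 by decide] at e
          have : M 2 = {0, 0 + 1} := (e.symm.trans e1).trans h0
          exact absurd (h2.symm.trans this) (by decide)
        · have e3 : M (2 + 1) = M 2 := key 2 h2
          rw [show (2 : Fin 5) + 1 = 3 by decide] at e3
          rcases hp 4 with h4 | h4
          · have e : M (4 - 1) = M 4 := key' 4 h4
            rw [show (4 : Fin 5) - 1 = 3 by decide] at e
            have : M 4 = {2, 2 + 1} := (e.symm.trans e3).trans h2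
            exact absurd (h4.symm.trans this) (by decide)
          · have e : M (4 + 1) = M 4 := key 4 h4
            rw [show (4 : Fin 5) + 1 = 0 by decide] at e
            have : M 4 = {0, 0 + 1} := e.symm.trans h0
            exact absurd (h4.symm.trans this) (by decide)
    obtain ⟨i, hi⟩ := hsing
    rcases shape (i - 1) with hprev | hprev | hprev
    · -- merge the two singletons {i-1} and {i}
      refine hRUE.2 {i - 1} {i} ⟨i - 1, hprev⟩ ⟨i, hi⟩ (ss_ne i) ?_
      refine ⟨ss_disj i, Or.inr (Or.inl ⟨i - 1, ss_union i⟩), ?_, ?_⟩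
      · intro k hk
        rcases ss_mem i k hk with h | h
        · rw [h, hprev]
          exact Nat.cast_le.mpr (le_of_lt (ss_costs i).1)
        · rw [h, hi]
          exact Nat.cast_le.mpr (le_of_lt (ss_costs i).2)
      · exact ⟨i, ss_self_mem i, by rw [hi]; exact Nat.cast_lt.mpr (ss_costs i).2⟩
    · -- merge the pair {i-2, i-1} with the singleton {i}
      rw [ps_eq] at hprev
      have hprev2 : M (i - 2) = {i - 2, i - 1} := by
        have := hcoh (i - 1) (i - 2) (by rw [hprev]; exact Finset.mem_insert_self _ _)
        rw [this, hprev]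
      refine hRUE.2 {i - 2, i - 1} {i} ⟨i - 1, hprev⟩ ⟨i, hi⟩ (ps_ne i) ?_
      refine ⟨ps_disj i, Or.inr (Or.inr ⟨i - 2, ps_union i⟩), ?_, ?_⟩
      · intro k hk
        rcases ps_mem i k hk with h | h | h
        · rw [h, hprev2]
          exact Nat.cast_le.mpr (le_of_lt (ps_costs i).1)
        · rw [h, hprev]
          exact Nat.cast_le.mpr (le_of_lt (ps_costs i).2.1)
        · rw [h, hi]
          exact Nat.cast_le.mpr (le_of_lt (ps_costs i).2.2)
      · exact ⟨i, ps_self_mem i, by rw [hi]; exact Nat.cast_lt.mpr (ps_costs i).2.2⟩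
    · -- impossible: then i ∈ M (i-1) so M i = M (i-1), a pair, contradiction
      have : M i = M (i - 1) := hcoh (i - 1) i (by rw [hprev]; exact mem_succ i)
      rw [hi, hprev] at this
      exact sing_ne_pair i this
end
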